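/- arXiv:2412.18958 — 6 statements merged into one kernel-verified Lean document; each statement's English description precedes it below -/
import Mathlib

section
/- There exists a sequence of polynomials (Φ_d(x))_{d≥1} with integer coefficients such that deg(Φ_d) = φ(d) (Euler's totient function) for every d ≥ 1, and for every n ≥ 1 the zpread polynomial factors as Z_n(x) = ∏_{d ∣ n} Φ_d(x). -/
open Polynomial

/-- The Lucas polynomials: `L 0 = 2`, `L 1 = X`, `L (n+2) = X * L (n+1) - L n`. -/
noncomputable def lucasPoly : ℕ → Polynomial ℤ
  | 0 => 2
  | 1 => X
  | n + 2 => X * lucasPoly (n + 1) - lucasPoly n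

/-- The zpread polynomials `Z n = 2 - L n (2 - X)`. -/
noncomputable def zpread (n : ℕ) : Polynomial ℤ := 2 - (lucasPoly n).comp (2 - X)

open LaurentPolynomial

section Aux

noncomputable def ev0 : Polynomial ℤ →ₐ[ℤ] LaurentPolynomial ℤ :=
  aeval (T 1 + T (-1))

lemma lucas_add_two (n : ℕ) :
    lucasPoly (n + 2) = X * lucasPoly (n + 1) - lucasPoly n := rfl

lemma monic_sub_aux {p q : Polynomial ℤ} (hp : p.Monic) (h : q.natDegree < p.natDegree) :
    (p - q).Monic ∧ (p - q).natDegree = p.natDegree := by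
  have hd : q.degree < p.degree := by
    refine lt_of_le_of_lt (degree_le_natDegree) ?_
    rw [degree_eq_natDegree hp.ne_zero]
    exact_mod_cast h
  exact ⟨hp.sub_of_left hd, natDegree_sub_eq_left_of_natDegree_lt h⟩

lemma lucas_aux : ∀ n : ℕ,
    ((lucasPoly (n+1)).Monic ∧ (lucasPoly (n+1)).natDegree = n+1) ∧
    ((lucasPoly (n+2)).Monic ∧ (lucasPoly (n+2)).natDegree = n+2) := by
  intro n
  induction n with
  | zero =>
    have h1 : lucasPoly 1 = X := rfl
    have h2 : lucasPoly 2 = X * X - 2 := rfl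
    have hm : ((X : Polynomial ℤ) * X).Monic := monic_X.mul monic_X
    have hd : ((X : Polynomial ℤ) * X).natDegree = 2 := by
      rw [natDegree_mul X_ne_zero X_ne_zero, natDegree_X]
    have h2' : ((2 : Polynomial ℤ)).natDegree < ((X : Polynomial ℤ) * X).natDegree := by
      rw [hd]; simp [natDegree_ofNat]
    obtain ⟨hm2, hd2⟩ := monic_sub_aux hm h2'
    exact ⟨⟨by rw [h1]; exact monic_X, by rw [h1, natDegree_X]⟩,
      ⟨by rw [h2]; exact hm2, by rw [h2, hd2, hd]⟩⟩
  | succ k ih =>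
    refine ⟨ih.2, ?_⟩
    obtain ⟨⟨m1, d1⟩, ⟨m2, d2⟩⟩ := ih
    have hXm : ((X : Polynomial ℤ) * lucasPoly (k+2)).Monic := monic_X.mul m2
    have hXd : ((X : Polynomial ℤ) * lucasPoly (k+2)).natDegree = k+3 := by
      rw [natDegree_mul X_ne_zero m2.ne_zero, natDegree_X, d2]; omega
    have hlt : (lucasPoly (k+1)).natDegree < ((X : Polynomial ℤ) * lucasPoly (k+2)).natDegree := by
      rw [hXd, d1]; omega
    obtain ⟨hm3, hd3⟩ := monic_sub_aux hXm hlt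
    rw [lucas_add_two]
    exact ⟨hm3, by rw [hd3, hXd]⟩

lemma lucas_monic (n : ℕ) : (lucasPoly (n+1)).Monic := (lucas_aux n).1.1
lemma lucas_natDegree (n : ℕ) : (lucasPoly (n+1)).natDegree = n+1 := (lucas_aux n).1.2

lemma ev0_lucas : ∀ n : ℕ, ev0 (lucasPoly n) = T n + T (-(n:ℤ)) := by
  have key : ∀ n : ℕ, ev0 (lucasPoly n) = T n + T (-(n:ℤ)) ∧
      ev0 (lucasPoly (n+1)) = T (n+1) + T (-((n:ℤ)+1)) := by
    intro n
    induction n with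
    | zero =>
      constructor
      · show ev0 2 = _
        simp only [ev0, map_ofNat]
        norm_num [T_zero]
      · show ev0 X = _
        simp [ev0]
    | succ k ih =>
      refine ⟨by simpa using ih.2, ?_⟩
      rw [lucas_add_two, map_sub, map_mul, ih.1, ih.2]
      have hx : ev0 X = T 1 + T (-1) := by simp [ev0]
      rw [hx]
      push_cast
      simp only [add_mul, mul_add, ← T_add]
      ring_nf
  intro n; exact (key n).1

lemma pal_exists : ∀ (m : ℕ) (p : Polynomial ℤ), p.natDegree ≤ 2*m →
    (∀ i, i ≤ 2*m → p.coeff i = p.coeff (2*m - i)) →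
    ∃ q : Polynomial ℤ, q.natDegree ≤ m ∧ q.coeff m = p.coeff (2*m) ∧
      toLaurent p = T (m:ℤ) * ev0 q := by
  intro m
  induction m with
  | zero =>
    intro p hdeg _
    refine ⟨Polynomial.C (p.coeff 0), by simp, by simp, ?_⟩
    have hp : p = Polynomial.C (p.coeff 0) := eq_C_of_natDegree_le_zero (by simpa using hdeg)
    rw [hp]
    simp [ev0]
  | succ m ih =>
    intro p hdeg hsym
    set c : ℤ := p.coeff (2*(m+1)) with hc
    have hc0 : p.coeff 0 = c := by
      have := hsym 0 (by omega)
      simpa using this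
    set s : Polynomial ℤ := Polynomial.C c * (X^(2*m+2) + 1) with hs
    have hscoeff : ∀ j, s.coeff j = if j = 0 then c else if j = 2*m+2 then c else 0 := by
      intro j
      rw [hs]
      rcases eq_or_ne j 0 with rfl | hj0
      · simp
      · rcases eq_or_ne j (2*m+2) with rfl | hj2
        · simp [coeff_one]
        · simp [coeff_X_pow, coeff_one, hj0, hj2]
    set p₁ : Polynomial ℤ := p - s with hp₁
    have hp₁0 : p₁.coeff 0 = 0 := by
      simp [hp₁, hscoeff, hc0]
    set r : Polynomial ℤ := p₁.divX with hr
    have hXr : X * r = p₁ := by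
      have := X_mul_divX_add p₁
      rwa [hp₁0, map_zero, add_zero] at this
    have hrc : ∀ i, r.coeff i = p₁.coeff (i+1) := fun i => coeff_divX
    have hp₁deg : ∀ j, 2*m+1 < j → p₁.coeff j = 0 := by
      intro j hj
      have h1 : p.coeff j = s.coeff j := by
        rcases eq_or_ne j (2*m+2) with rfl | hj2
        · rw [hscoeff]; simp [hc]; ring_nf
        · have : p.coeff j = 0 := coeff_eq_zero_of_natDegree_lt (by omega)
          rw [this, hscoeff]; simp [hj2]; omega
      simp [hp₁, h1]
    have hrdeg : r.natDegree ≤ 2*m := natDegree_le_iff_coeff_eq_zero.2 (by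
      intro j hj
      rw [hrc]
      exact hp₁deg (j+1) (by omega))
    have hrsym : ∀ i, i ≤ 2*m → r.coeff i = r.coeff (2*m - i) := by
      intro i hi
      have e : ∀ i, 1 ≤ i → i ≤ 2*m+1 → p₁.coeff i = p.coeff i := by
        intro i h1 h2
        have : s.coeff i = 0 := by rw [hscoeff]; split_ifs <;> omega
        simp [hp₁, this]
      rw [hrc, hrc, e (i+1) (by omega) (by omega), e (2*m-i+1) (by omega) (by omega)]
      have := hsym (i+1) (by omega)
      rw [this]
      congr 1
      omega
    obtain ⟨q', hq'deg, hq'c, hq'L⟩ := ih r hrdeg hrsym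
    refine ⟨Polynomial.C c * lucasPoly (m+1) + q', ?_, ?_, ?_⟩
    · refine le_trans (natDegree_add_le _ _) ?_
      refine max_le (le_trans (natDegree_C_mul_le _ _) ?_) (le_trans hq'deg (by omega))
      rw [lucas_natDegree]
    · rw [coeff_add, coeff_C_mul]
      have h1 : (lucasPoly (m+1)).coeff (m+1) = 1 := by
        have h := (lucas_monic m).coeff_natDegree
        rwa [lucas_natDegree] at h
      have h2 : q'.coeff (m+1) = 0 := coeff_eq_zero_of_natDegree_lt (by omega)
      rw [h1, h2]; ring
    · have hpsplit : p = s + X * r := by rw [hXr, hp₁]; ring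
      rw [hpsplit, map_add, map_mul, map_add, map_mul, map_add, map_mul, ev0_lucas, hq'L]
      rw [Polynomial.toLaurent_C, Polynomial.toLaurent_X, Polynomial.toLaurent_X_pow,
        Polynomial.toLaurent_one]
      have hC : ∀ a : ℤ, ev0 (Polynomial.C a) = LaurentPolynomial.C a := by
        intro a; simp [ev0, algebraMap_eq_toLaurent]
      rw [hC]
      have A : (T ((m:ℤ)+1) * T (-((m:ℤ)+1)) : LaurentPolynomial ℤ) = 1 := by
        rw [← T_add, show (m:ℤ)+1 + -((m:ℤ)+1) = 0 from by ring, T_zero]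
      have B : (T ((m:ℤ)+1) * T ((m:ℤ)+1) : LaurentPolynomial ℤ) = T (2*(m:ℤ)+2) := by
        rw [← T_add]; ring_nf
      have Cq : (T (1:ℤ) * T (m:ℤ) : LaurentPolynomial ℤ) = T ((m:ℤ)+1) := by
        rw [← T_add]; ring_nf
      push_cast
      linear_combination (ev0 q') * Cq - LaurentPolynomial.C c * B - LaurentPolynomial.C c * A

lemma natDegree_X_sq_add_one : ((X:Polynomial ℤ)^2 + 1).natDegree = 2 := by
  have : ((X:Polynomial ℤ)^2 + 1) = X^2 + Polynomial.C 1 := by norm_num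
  rw [this, natDegree_X_pow_add_C]

lemma ev0_injective : Function.Injective ev0 := by
  have h0 : ∀ q : Polynomial ℤ, ev0 q = 0 → q = 0 := by
    intro q hq
    by_contra hne
    set n := q.natDegree with hn
    set F : Polynomial ℤ :=
      ∑ k ∈ Finset.range (n+1), Polynomial.C (q.coeff k) * (X^(n-k) * (X^2+1)^k) with hF
    have hmon : ((X:Polynomial ℤ)^2 + 1).Monic := by
      have := monic_X_pow_add (p := (1 : Polynomial ℤ)) (n := 2) (by
        simpa using (degree_one_le.trans (by norm_num)))
      simpa using this
    have key : toLaurent F = T (n:ℤ) * ev0 q := by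
      conv_rhs => rw [q.as_sum_range_C_mul_X_pow, map_sum, Finset.mul_sum]
      rw [hF, map_sum]
      refine Finset.sum_congr rfl ?_
      intro k hk
      have hk' : k ≤ n := by
        have := Finset.mem_range.1 hk; omega
      have hevX : ev0 (X : Polynomial ℤ) = T 1 + T (-1) := by simp [ev0]
      have hevC : ∀ a : ℤ, ev0 (Polynomial.C a) = LaurentPolynomial.C a := by
        intro a; simp [ev0, algebraMap_eq_toLaurent]
      have e1 : toLaurent ((X:Polynomial ℤ)^2 + 1) = T 1 * (T 1 + T (-1)) := by
        rw [map_add, Polynomial.toLaurent_X_pow, Polynomial.toLaurent_one]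
        rw [mul_add, ← T_add, ← T_add]
        norm_num
      conv_rhs => rw [map_mul, map_pow, hevC, hevX]
      conv_lhs => rw [map_mul, map_mul, Polynomial.toLaurent_C,
        Polynomial.toLaurent_X_pow, map_pow, e1]
      rw [mul_pow, show (T 1 ^ k : LaurentPolynomial ℤ) = T (k:ℤ) from by rw [T_pow]; norm_num]
      have Rel : (T ((n-k : ℕ):ℤ) * T (k:ℤ) : LaurentPolynomial ℤ) = T (n:ℤ) := by
        rw [← T_add]; congr 1; push_cast [Nat.cast_sub hk']; ring
      linear_combination (LaurentPolynomial.C (q.coeff k) * (T 1 + T (-1))^k) * Rel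
    rw [hq, mul_zero] at key
    have hF0 : F = 0 := Polynomial.toLaurent_injective (by rw [key, map_zero])
    have hcoe : F.coeff (2*n) = q.coeff n := by
      rw [hF, finset_sum_coeff]
      rw [Finset.sum_eq_single n]
      · rw [Nat.sub_self, pow_zero, one_mul, coeff_C_mul]
        have hdeg2 : (((X:Polynomial ℤ)^2+1)^n).natDegree = 2*n := by
          rw [hmon.natDegree_pow, natDegree_X_sq_add_one]; ring
        have hlc : (((X:Polynomial ℤ)^2+1)^n).coeff (2*n) = 1 := by
          rw [← hdeg2]; exact (hmon.pow n).coeff_natDegree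
        rw [hlc, mul_one]
      · intro k hk hkn
        have hk' : k ≤ n := by have := Finset.mem_range.1 hk; omega
        apply coeff_eq_zero_of_natDegree_lt
        calc (Polynomial.C (q.coeff k) * (X^(n-k) * ((X:Polynomial ℤ)^2+1)^k)).natDegree
            ≤ _ := natDegree_C_mul_le _ _
          _ ≤ (X^(n-k):Polynomial ℤ).natDegree + (((X:Polynomial ℤ)^2+1)^k).natDegree :=
              natDegree_mul_le
          _ ≤ (n-k) + 2*k := by
              have h1 : (X^(n-k):Polynomial ℤ).natDegree = n-k := natDegree_X_pow _
              have h2 : (((X:Polynomial ℤ)^2+1)^k).natDegree = 2*k := by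
                rw [hmon.natDegree_pow, natDegree_X_sq_add_one]; ring
              omega
          _ < 2*n := by omega
      · intro h; exact absurd (Finset.self_mem_range_succ n) h
    rw [hF0, coeff_zero] at hcoe
    exact hne (leadingCoeff_eq_zero.1 hcoe.symm)
  intro a b hab
  have h1 : ev0 (a - b) = 0 := by rw [map_sub, hab, sub_self]
  exact sub_eq_zero.1 (h0 _ h1)

lemma mul_reverse_sym (f : Polynomial ℤ) :
    ∀ i, i ≤ 2 * f.natDegree →
      (f * f.reverse).coeff i = (f * f.reverse).coeff (2 * f.natDegree - i) := by
  intro i hi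
  set m := f.natDegree with hm
  have hrr : reflect m f.reverse = f := by
    ext j
    rw [coeff_reflect, Polynomial.coeff_reverse, revAt_invol]
  have h1 : reflect (m + m) (f * f.reverse) = f.reverse * f := by
    rw [reflect_mul f f.reverse le_rfl f.reverse_natDegree_le, hrr, mul_comm]
    rw [Polynomial.reverse, mul_comm]
  have h2 : (f * f.reverse).coeff (2*m - i) = (reflect (m+m) (f * f.reverse)).coeff i := by
    rw [coeff_reflect, revAt_le (by omega : i ≤ m + m)]
    congr 1
    omega
  rw [h2, h1, mul_comm]

lemma cyclo_coeff_zero_ne (d : ℕ) (hd : 1 ≤ d) : (cyclotomic d ℤ).coeff 0 ≠ 0 := by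
  rcases eq_or_lt_of_le hd with h | h
  · rw [← h, cyclotomic_one]
    simp
  · rw [cyclotomic_coeff_zero ℤ h]
    norm_num

lemma cyclo_trailing (d : ℕ) (hd : 1 ≤ d) : (cyclotomic d ℤ).natTrailingDegree = 0 := by
  rw [natTrailingDegree_eq_zero]
  exact Or.inr (cyclo_coeff_zero_ne d hd)

lemma cyclo_rev_natDegree (d : ℕ) (hd : 1 ≤ d) :
    (cyclotomic d ℤ).reverse.natDegree = d.totient := by
  rw [reverse_natDegree, natDegree_cyclotomic, cyclo_trailing d hd]
  omega

lemma reverse_prod (s : Finset ℕ) (g : ℕ → Polynomial ℤ) :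
    (∏ d ∈ s, g d).reverse = ∏ d ∈ s, (g d).reverse := by
  induction s using Finset.cons_induction with
  | empty => simp [Polynomial.reverse, reflect_one]
  | cons a s ha ih => rw [Finset.prod_cons, Finset.prod_cons, reverse_mul_of_domain, ih]

lemma comp_twice (p : Polynomial ℤ) : (p.comp (2 - X)).comp (2 - X) = p := by
  rw [comp_assoc]
  have : ((2 - X : Polynomial ℤ)).comp (2 - X) = X := by
    simp [sub_comp]
  rw [this, comp_X]

lemma natDegree_two_sub_X : (2 - X : Polynomial ℤ).natDegree = 1 := by
  have : (2 - X : Polynomial ℤ) = -(X - Polynomial.C 2) := by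
    have h2C : (2 : Polynomial ℤ) = Polynomial.C 2 := by norm_num
    rw [h2C]; ring
  rw [this, natDegree_neg, natDegree_X_sub_C]

end Aux

/-- There is a sequence of integer polynomials `Φ d` with `deg (Φ d) = φ(d)` for all `d ≥ 1`,
such that `Z n = ∏_{d ∣ n} Φ d` for all `n ≥ 1`. -/
theorem goh_wildberger_factorization :
    ∃ Φ : ℕ → Polynomial ℤ,
      (∀ d : ℕ, 1 ≤ d → (Φ d).natDegree = Nat.totient d) ∧
      (∀ n : ℕ, 1 ≤ n → zpread n = ∏ d ∈ Nat.divisors n, Φ d) := by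
  classical
  set p : ℕ → Polynomial ℤ := fun d => cyclotomic d ℤ * (cyclotomic d ℤ).reverse with hp
  have H : ∀ d : ℕ, ∃ q : Polynomial ℤ, q.natDegree ≤ d.totient ∧
      q.coeff d.totient = (p d).coeff (2 * d.totient) ∧
      toLaurent (p d) = T ((d.totient : ℕ):ℤ) * ev0 q := by
    intro d
    have hcd : (cyclotomic d ℤ).natDegree = d.totient := natDegree_cyclotomic d ℤ
    refine pal_exists d.totient (p d) ?_ ?_
    · refine le_trans natDegree_mul_le ?_
      have := (cyclotomic d ℤ).reverse_natDegree_le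
      omega
    · intro i hi
      have := mul_reverse_sym (cyclotomic d ℤ) i (by rw [hcd]; exact hi)
      rw [hcd] at this
      exact this
  choose Q hQdeg hQc hQL using H
  refine ⟨fun d => (Q d).comp (2 - X), ?_, ?_⟩
  · -- degrees
    intro d hd
    have hcd : (cyclotomic d ℤ).natDegree = d.totient := natDegree_cyclotomic d ℤ
    have hlead : (p d).coeff (2 * d.totient) ≠ 0 := by
      have e := coeff_mul_degree_add_degree (cyclotomic d ℤ) (cyclotomic d ℤ).reverse
      rw [hcd, cyclo_rev_natDegree d hd] at e
      have e2 : 2 * d.totient = d.totient + d.totient := by ring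
      rw [hp, e2]
      rw [e]
      have hl1 : (cyclotomic d ℤ).leadingCoeff = 1 := (cyclotomic.monic d ℤ).leadingCoeff
      have hl2 : (cyclotomic d ℤ).reverse.leadingCoeff = (cyclotomic d ℤ).coeff 0 := by
        rw [reverse_leadingCoeff, Polynomial.trailingCoeff, cyclo_trailing d hd]
      rw [hl1, hl2, one_mul]
      exact cyclo_coeff_zero_ne d hd
    have hQd : (Q d).natDegree = d.totient := by
      refine le_antisymm (hQdeg d) ?_
      refine le_natDegree_of_ne_zero ?_
      rw [hQc d]
      exact hlead
    rw [natDegree_comp, hQd, natDegree_two_sub_X, mul_one]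
  · -- factorization
    intro n hn
    have hW : (zpread n).comp (2 - X) = 2 - lucasPoly n := by
      rw [zpread, sub_comp, comp_assoc]
      have : ((2 - X : Polynomial ℤ)).comp (2 - X) = X := by simp [sub_comp]
      rw [this, comp_X]
      norm_num
    -- Laurent computation
    have hTprod : ∀ s : Finset ℕ, (∏ d ∈ s, (T ((d.totient : ℕ):ℤ) : LaurentPolynomial ℤ))
        = T ((∑ d ∈ s, (d.totient:ℤ))) := by
      intro s
      induction s using Finset.cons_induction with
      | empty => simp [T_zero]
      | cons a s ha ih => rw [Finset.prod_cons, Finset.sum_cons, T_add, ih]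
    have hsum : (∑ d ∈ n.divisors, ((d.totient:ℤ))) = (n:ℤ) := by
      rw [← Nat.cast_sum]
      exact_mod_cast congrArg (Nat.cast : ℕ → ℤ) (Nat.sum_totient n)
    have hprod1 : toLaurent (∏ d ∈ n.divisors, p d)
        = T ((n:ℤ)) * ev0 (∏ d ∈ n.divisors, Q d) := by
      rw [map_prod, map_prod]
      calc ∏ d ∈ n.divisors, toLaurent (p d)
          = ∏ d ∈ n.divisors, (T ((d.totient : ℕ):ℤ) * ev0 (Q d)) :=
            Finset.prod_congr rfl (fun d _ => hQL d)
        _ = (∏ d ∈ n.divisors, (T ((d.totient : ℕ):ℤ) : LaurentPolynomial ℤ))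
              * ∏ d ∈ n.divisors, ev0 (Q d) := Finset.prod_mul_distrib
        _ = T ((n:ℤ)) * ∏ d ∈ n.divisors, ev0 (Q d) := by rw [hTprod, hsum]
    have hprod2 : (∏ d ∈ n.divisors, p d) = (X^n - 1) * (1 - X^n) := by
      have hcyc : (∏ d ∈ n.divisors, cyclotomic d ℤ) = X^n - 1 :=
        prod_cyclotomic_eq_X_pow_sub_one hn ℤ
      have hrev : (X^n - 1 : Polynomial ℤ).reverse = 1 - X^n := by
        have hdeg : (X^n - 1 : Polynomial ℤ).natDegree = n := by
          have : (X^n - 1 : Polynomial ℤ) = X^n - Polynomial.C 1 := by norm_num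
          rw [this, natDegree_X_pow_sub_C]
        rw [Polynomial.reverse, hdeg, reflect_sub, reflect_monomial, revAt_le le_rfl,
          Nat.sub_self, pow_zero]
        rw [show ((1:Polynomial ℤ)).reflect n = X^n from reflect_one n]
      calc (∏ d ∈ n.divisors, p d)
          = (∏ d ∈ n.divisors, cyclotomic d ℤ) * ∏ d ∈ n.divisors, (cyclotomic d ℤ).reverse :=
            Finset.prod_mul_distrib
        _ = (X^n - 1) * (1 - X^n) := by
            rw [← reverse_prod, hcyc, hrev]
    have hzp : ev0 ((zpread n).comp (2 - X)) = ev0 (∏ d ∈ n.divisors, Q d) := by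
      rw [hW, map_sub, ev0_lucas]
      have h2 : ev0 (2 : Polynomial ℤ) = 2 := by rw [map_ofNat]
      rw [h2]
      have hTn : (T ((n:ℤ)) * T (-(n:ℤ)) : LaurentPolynomial ℤ) = 1 := by
        rw [← T_add, add_neg_cancel, T_zero]
      have key : T ((n:ℤ)) * ev0 (∏ d ∈ n.divisors, Q d)
          = (T ((n:ℤ)) - 1) * (1 - T ((n:ℤ))) := by
        rw [← hprod1, hprod2, map_mul, map_sub, map_sub, Polynomial.toLaurent_X_pow,
          Polynomial.toLaurent_one]
      linear_combination (-(T (-(n:ℤ)))) * key + (ev0 (∏ d ∈ n.divisors, Q d) - 2 + T ((n:ℤ))) * hTn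
    have hWz : (zpread n).comp (2 - X) = ∏ d ∈ n.divisors, Q d := ev0_injective hzp
    calc zpread n = ((zpread n).comp (2 - X)).comp (2 - X) := (comp_twice _).symm
      _ = (∏ d ∈ n.divisors, Q d).comp (2 - X) := by rw [hWz]
      _ = ∏ d ∈ n.divisors, (Q d).comp (2 - X) := by
          rw [comp_eq_aeval, map_prod]
          exact Finset.prod_congr rfl (fun d _ => (comp_eq_aeval).symm)
end

section
/- For every odd n = 2m+1 with m ≥ 0, the factorization L_n(x) − 2 = (x − 2)·∏_{k=1}^{m} (x − 2cos(2πk/n))² holds in ℝ[x]; and for every even n = 2m with m ≥ 1, the factorization L_n(x) − 2 = (x − 2)(x + 2)·∏_{k=1}^{m−1} (x − 2cos(2πk/n))² holds in ℝ[x]. In particular the roots of L_n(x) − 2 are ν_k = 2cos(2πk/n) for 0 ≤ k ≤ n/2, where the interior roots are double roots and ν_0 = 2 (and ν_{n/2} = −2 for even n) are simple roots. -/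
open Polynomial

noncomputable def Lr (n : ℕ) : Polynomial ℝ := (lucasPoly n).map (Int.castRingHom ℝ)

lemma Lr_zero : Lr 0 = 2 := by simp [Lr, lucasPoly]
lemma Lr_one : Lr 1 = X := by simp [Lr, lucasPoly]
lemma Lr_add_two (n : ℕ) : Lr (n + 2) = X * Lr (n + 1) - Lr n := by
  simp [Lr, lucasPoly, Polynomial.map_sub, Polynomial.map_mul]

lemma Lr_monic_deg : ∀ n : ℕ, (Lr (n + 1)).Monic ∧ (Lr (n + 1)).natDegree = n + 1 := by
  intro n
  induction n using Nat.strong_induction_on with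
  | _ n ih =>
    match n with
    | 0 => simpa [Lr_one] using monic_X
    | 1 =>
      rw [show (1:ℕ)+1 = 0+2 from rfl, Lr_add_two, Lr_zero, Lr_one]
      have h2 : X * X - 2 = X ^ 2 + (-2 : ℝ[X]) := by ring
      constructor
      · rw [h2]
        refine (monic_X_pow 2).add_of_left ?_
        have : ((-2 : ℝ[X])).degree ≤ 0 := by
          rw [show (-2 : ℝ[X]) = C (-2) by rw [map_neg, map_ofNat]]; exact degree_C_le
        refine this.trans_lt ?_
        rw [degree_X_pow]
        norm_num
      · rw [h2]; compute_degree!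
    | n + 2 =>
      obtain ⟨h1m, h1d⟩ := ih (n + 1) (by omega)
      obtain ⟨h0m, h0d⟩ := ih n (by omega)
      rw [show n + 2 + 1 = (n + 1) + 2 from rfl, Lr_add_two]
      have hm : (X * Lr (n + 1 + 1)).Monic := monic_X.mul h1m
      have hd : (X * Lr (n + 1 + 1)).natDegree = n + 3 := by
        rw [natDegree_mul X_ne_zero h1m.ne_zero, natDegree_X, h1d]; omega
      have hlt : (Lr (n + 1)).degree < (X * Lr (n + 1 + 1)).degree := by
        rw [degree_eq_natDegree h0m.ne_zero, degree_eq_natDegree hm.ne_zero, h0d, hd]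
        exact_mod_cast by omega
      refine ⟨hm.sub_of_left hlt, ?_⟩
      rw [natDegree_sub_eq_left_of_natDegree_lt (by omega : (Lr (n+1)).natDegree < _), hd]

open Real in
lemma Lr_eval_cos : ∀ n : ℕ, ∀ θ : ℝ, (Lr n).eval (2 * cos θ) = 2 * cos (n * θ) := by
  intro n
  induction n using Nat.strong_induction_on with
  | _ n ih =>
    match n with
    | 0 => intro θ; simp [Lr_zero]
    | 1 => intro θ; simp [Lr_one]
    | n + 2 =>
      intro θ
      rw [Lr_add_two]
      simp only [eval_sub, eval_mul, eval_X, ih (n+1) (by omega), ih n (by omega)]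
      have h1 : ((n + 2 : ℕ) : ℝ) * θ = ((n+1 : ℕ) : ℝ) * θ + θ := by push_cast; ring
      have h2 : ((n : ℕ) : ℝ) * θ = ((n+1 : ℕ) : ℝ) * θ - θ := by push_cast; ring
      rw [h1, h2, cos_add, cos_sub]
      ring

open Real in
lemma Lr_deriv_eval (n : ℕ) (θ : ℝ) (hs : sin θ ≠ 0) (hns : sin ((n : ℝ) * θ) = 0) :
    (Lr n).derivative.eval (2 * cos θ) = 0 := by
  have hinner : HasDerivAt (fun t : ℝ => 2 * cos t) (2 * (-sin θ)) θ :=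
    (Real.hasDerivAt_cos θ).const_mul 2
  have houter : HasDerivAt (fun x : ℝ => (Lr n).eval x)
      ((Lr n).derivative.eval (2 * cos θ)) (2 * cos θ) := (Lr n).hasDerivAt _
  have h1 : HasDerivAt (fun t : ℝ => (Lr n).eval (2 * cos t))
      ((Lr n).derivative.eval (2 * cos θ) * (2 * (-sin θ))) θ := by
    have := houter.comp θ hinner; exact this
  have h2 : HasDerivAt (fun t : ℝ => 2 * cos ((n : ℝ) * t))
      (2 * (-sin ((n : ℝ) * θ) * (n : ℝ))) θ := by
    have := ((Real.hasDerivAt_cos ((n : ℝ) * θ)).comp θ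
      ((hasDerivAt_id θ).const_mul (n : ℝ))).const_mul 2
    simpa [mul_comm, mul_assoc] using this
  have heq : (fun t : ℝ => (Lr n).eval (2 * cos t)) = fun t : ℝ => 2 * cos ((n : ℝ) * t) := by
    funext t; exact Lr_eval_cos n t
  rw [heq] at h1
  have := h1.unique h2
  rw [hns] at this
  have h2s : (2 : ℝ) * sin θ ≠ 0 := by positivity
  field_simp at this
  exact (mul_eq_zero.mp (by linarith : (Lr n).derivative.eval (2 * cos θ) * sin θ = 0)).resolve_right hs

lemma sq_dvd_of_root_deriv {p : ℝ[X]} {r : ℝ} (h0 : p.eval r = 0)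
    (h1 : p.derivative.eval r = 0) : (X - C r) ^ 2 ∣ p := by
  obtain ⟨q, hq⟩ := dvd_iff_isRoot.mpr h0
  have hd : p.derivative = q + (X - C r) * q.derivative := by
    rw [hq, derivative_mul]
    simp
  have hqr : q.eval r = 0 := by
    have := h1
    rw [hd] at this
    simpa using this
  obtain ⟨q2, hq2⟩ := dvd_iff_isRoot.mpr hqr
  refine ⟨q2, ?_⟩
  rw [hq, hq2]; ring

lemma eq_of_monic_dvd {p q : ℝ[X]} (hp : p.Monic) (hq : q.Monic) (hd : q ∣ p)
    (hdeg : p.natDegree = q.natDegree) : p = q := by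
  obtain ⟨c, rfl⟩ := hd
  have hc0 : c ≠ 0 := by
    rintro rfl
    exact hp.ne_zero (by ring)
  have hcd : c.natDegree = 0 := by
    rw [natDegree_mul hq.ne_zero hc0] at hdeg
    omega
  have hcm : c.Monic := by
    have := hp
    unfold Monic at this ⊢
    rwa [leadingCoeff_mul, hq.leadingCoeff, one_mul] at this
  rw [eq_one_of_monic_natDegree_zero hcm hcd, mul_one]

open Real

noncomputable def nu (n k : ℕ) : ℝ := 2 * cos (2 * π * k / n)

lemma nu_zero (n : ℕ) : nu n 0 = 2 := by simp [nu]

lemma nu_half (m : ℕ) (hm : 1 ≤ m) : nu (2 * m) m = -2 := by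
  have h : 2 * π * (m : ℝ) / ((2 * m : ℕ) : ℝ) = π := by
    have : (m : ℝ) ≠ 0 := Nat.cast_ne_zero.mpr (by omega)
    push_cast
    field_simp
  unfold nu
  rw [h, Real.cos_pi]
  norm_num

lemma eval_Lr_sub_two (n : ℕ) (hn : n ≠ 0) (k : ℕ) : (Lr n).eval (nu n k) = 2 := by
  unfold nu
  rw [Lr_eval_cos]
  have h : (n : ℝ) * (2 * π * k / n) = (k : ℝ) * (2 * π) := by
    have : (n : ℝ) ≠ 0 := Nat.cast_ne_zero.mpr hn
    field_simp
  rw [h, Real.cos_nat_mul_two_pi]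
  norm_num

lemma deriv_Lr_zero (n : ℕ) (k : ℕ) (hk1 : 1 ≤ k) (hk2 : 2 * k < n) :
    (Lr n).derivative.eval (nu n k) = 0 := by
  have hn : (n : ℝ) ≠ 0 := Nat.cast_ne_zero.mpr (by omega)
  have hπ := Real.pi_pos
  have hθpos : 0 < 2 * π * (k : ℝ) / n := by
    have : (0:ℝ) < k := by exact_mod_cast hk1
    have : (0:ℝ) < n := by positivity
    positivity
  have hθlt : 2 * π * (k : ℝ) / n < π := by
    rw [div_lt_iff₀ (by positivity : (0:ℝ) < n)]
    have h2k : (2 * k : ℝ) < n := by exact_mod_cast hk2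
    nlinarith
  apply Lr_deriv_eval
  · exact ne_of_gt (Real.sin_pos_of_pos_of_lt_pi hθpos hθlt)
  · have h : (n : ℝ) * (2 * π * k / n) = ((2 * k : ℕ) : ℝ) * π := by
      push_cast; field_simp
    rw [h, Real.sin_nat_mul_pi]

lemma nu_injOn (n : ℕ) (hn : n ≠ 0) {i j : ℕ} (hi : 2 * i ≤ n) (hj : 2 * j ≤ n)
    (h : nu n i = nu n j) : i = j := by
  have hπ := Real.pi_pos
  have hnR : (0:ℝ) < n := by exact_mod_cast Nat.pos_of_ne_zero hn
  have hmem : ∀ k : ℕ, 2 * k ≤ n → 2 * π * (k : ℝ) / n ∈ Set.Icc 0 π := by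
    intro k hk
    constructor
    · positivity
    · rw [div_le_iff₀ hnR]
      have : (2 * k : ℝ) ≤ n := by exact_mod_cast hk
      nlinarith
  have hcos : cos (2 * π * (i : ℝ) / n) = cos (2 * π * (j : ℝ) / n) := by
    have := h; unfold nu at this; linarith
  have := Real.injOn_cos (hmem i hi) (hmem j hj) hcos
  field_simp at this
  exact_mod_cast this

lemma two_poly : (2 : ℝ[X]) = C 2 := by rw [map_ofNat]

lemma p_monic_deg (n : ℕ) (hn : n ≠ 0) :
    (Lr n - 2).Monic ∧ (Lr n - 2).natDegree = n := by
  obtain ⟨n, rfl⟩ : ∃ k, n = k + 1 := ⟨n - 1, by omega⟩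
  obtain ⟨hm, hd⟩ := Lr_monic_deg n
  have hdeg2 : (2 : ℝ[X]).degree < (Lr (n+1)).degree := by
    rw [degree_eq_natDegree hm.ne_zero, hd, two_poly]
    exact degree_C_le.trans_lt (by exact_mod_cast by omega)
  refine ⟨hm.sub_of_left hdeg2, ?_⟩
  rw [natDegree_sub_eq_left_of_natDegree_lt, hd]
  rw [two_poly, natDegree_C, hd]
  omega

lemma p_eval_zero (n : ℕ) (hn : n ≠ 0) (k : ℕ) : (Lr n - 2).eval (nu n k) = 0 := by
  simp [eval_Lr_sub_two n hn k]

lemma p_deriv_zero (n k : ℕ) (hk1 : 1 ≤ k) (hk2 : 2 * k < n) :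
    (Lr n - 2).derivative.eval (nu n k) = 0 := by
  rw [derivative_sub, two_poly, derivative_C]
  simpa using deriv_Lr_zero n k hk1 hk2

lemma prod_dvd_p (n m : ℕ) (hn : n ≠ 0) (h2m : 2 * m ≤ n) (e : ℕ → ℕ)
    (he : ∀ k, k ≤ m → e k = 1 ∨ (e k = 2 ∧ 1 ≤ k ∧ 2 * k < n)) :
    (∏ k ∈ Finset.Icc 0 m, (X - C (nu n k)) ^ e k) ∣ (Lr n - 2) := by
  apply Finset.prod_dvd_of_coprime
  · intro i hi j hj hij
    simp only [Finset.coe_Icc, Set.mem_Icc] at hi hj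
    have hne : nu n i ≠ nu n j := fun h => hij (nu_injOn n hn (by omega) (by omega) h)
    exact ((isCoprime_X_sub_C_of_isUnit_sub
      ((sub_ne_zero_of_ne hne).isUnit)).pow : IsCoprime _ _)
  · intro k hk
    simp only [Finset.mem_Icc] at hk
    rcases he k hk.2 with h1 | ⟨h2, hk1, hk2⟩
    · rw [h1, pow_one]
      exact dvd_iff_isRoot.mpr (p_eval_zero n hn k)
    · rw [h2]
      exact sq_dvd_of_root_deriv (p_eval_zero n hn k) (p_deriv_zero n k hk1 hk2)

lemma icc_split (m : ℕ) : Finset.Icc 0 m = insert 0 (Finset.Icc 1 m) := by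
  ext x; simp; omega

lemma odd_case (m : ℕ) :
    Lr (2 * m + 1) - 2 =
      (X - 2) * ∏ k ∈ Finset.Icc 1 m, (X - C (nu (2 * m + 1) k)) ^ 2 := by
  set n := 2 * m + 1 with hn
  have hn0 : n ≠ 0 := by omega
  set q : ℝ[X] := (X - 2) * ∏ k ∈ Finset.Icc 1 m, (X - C (nu n k)) ^ 2 with hq
  have hq2 : q = ∏ k ∈ Finset.Icc 0 m, (X - C (nu n k)) ^ (if k = 0 then 1 else 2) := by
    rw [icc_split, Finset.prod_insert (by simp), if_pos rfl, pow_one, nu_zero, ← two_poly, hq]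
    congr 1
    refine Finset.prod_congr rfl fun k hk => ?_
    rw [if_neg (by simp at hk; omega)]
  have hdvd : q ∣ Lr n - 2 := by
    rw [hq2]
    exact prod_dvd_p n m hn0 (by omega) _ (fun k hk => by
      by_cases h : k = 0
      · left; simp [h]
      · right; exact ⟨by simp [h], by omega, by omega⟩)
  have hqm : q.Monic := by
    rw [hq, two_poly]
    exact (monic_X_sub_C 2).mul (monic_prod_of_monic _ _ fun k _ => (monic_X_sub_C _).pow 2)
  have hqd : q.natDegree = n := by
    rw [hq, two_poly, (monic_X_sub_C (2:ℝ)).natDegree_mul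
      (monic_prod_of_monic _ _ fun k _ => (monic_X_sub_C _).pow 2),
      natDegree_X_sub_C, natDegree_prod_of_monic _ _ (fun k _ => (monic_X_sub_C _).pow 2)]
    simp [natDegree_pow, natDegree_X_sub_C, Finset.sum_const, Nat.card_Icc]
    omega
  obtain ⟨hpm, hpd⟩ := p_monic_deg n hn0
  exact eq_of_monic_dvd hpm hqm hdvd (by omega)

lemma icc_split2 (m : ℕ) (hm : 1 ≤ m) :
    Finset.Icc 0 m = insert 0 (insert m (Finset.Icc 1 (m - 1))) := by
  ext x; simp; omega

lemma X_add_two : X + 2 = X - C (-2 : ℝ) := by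
  rw [map_neg, ← two_poly, sub_neg_eq_add]

lemma even_case (m : ℕ) (hm : 1 ≤ m) :
    Lr (2 * m) - 2 =
      (X - 2) * (X + 2) * ∏ k ∈ Finset.Icc 1 (m - 1), (X - C (nu (2 * m) k)) ^ 2 := by
  set n := 2 * m with hn
  have hn0 : n ≠ 0 := by omega
  set q : ℝ[X] := (X - 2) * (X + 2) * ∏ k ∈ Finset.Icc 1 (m - 1), (X - C (nu n k)) ^ 2
    with hq
  have hq2 : q = ∏ k ∈ Finset.Icc 0 m, (X - C (nu n k)) ^ (if k = 0 ∨ k = m then 1 else 2) := by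
    rw [icc_split2 m hm, Finset.prod_insert (by simp; omega),
      Finset.prod_insert (by simp; omega), if_pos (Or.inl rfl), if_pos (Or.inr rfl),
      pow_one, pow_one, nu_zero, nu_half m hm, ← two_poly, ← X_add_two, hq, ← mul_assoc]
    congr 1
    refine Finset.prod_congr rfl fun k hk => ?_
    rw [if_neg (by simp at hk; omega)]
  have hdvd : q ∣ Lr n - 2 := by
    rw [hq2]
    exact prod_dvd_p n m hn0 (by omega) _ (fun k hk => by
      by_cases h : k = 0 ∨ k = m
      · left; simp [h]
      · right; refine ⟨by simp [h], by omega, by omega⟩)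
  have hqm : q.Monic := by
    rw [hq, X_add_two, two_poly]
    exact ((monic_X_sub_C 2).mul (monic_X_sub_C (-2))).mul
      (monic_prod_of_monic _ _ fun k _ => (monic_X_sub_C _).pow 2)
  have hqd : q.natDegree = n := by
    rw [hq, X_add_two, two_poly,
      ((monic_X_sub_C (2:ℝ)).mul (monic_X_sub_C (-2:ℝ))).natDegree_mul
        (monic_prod_of_monic _ _ fun k _ => (monic_X_sub_C _).pow 2),
      (monic_X_sub_C (2:ℝ)).natDegree_mul (monic_X_sub_C (-2:ℝ)),
      natDegree_X_sub_C, natDegree_X_sub_C,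
      natDegree_prod_of_monic _ _ (fun k _ => (monic_X_sub_C _).pow 2)]
    simp [natDegree_pow, natDegree_X_sub_C, Finset.sum_const, Nat.card_Icc]
    omega
  obtain ⟨hpm, hpd⟩ := p_monic_deg n hn0
  exact eq_of_monic_dvd hpm hqm hdvd (by omega)


/-- Factorization of `L n - 2` over `ℝ`: for odd `n = 2m+1`,
`L n - 2 = (X - 2) · ∏_{k=1}^{m} (X - 2cos(2πk/n))²`, and for even `n = 2m` with `m ≥ 1`,
`L n - 2 = (X - 2)(X + 2) · ∏_{k=1}^{m-1} (X - 2cos(2πk/n))²`. In particular the roots of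
`L n - 2` are `2cos(2πk/n)`, `0 ≤ k ≤ n/2`, interior ones double and `±2` simple. -/
theorem lucas_sub_two_root_factorization :
    (∀ m : ℕ,
      (lucasPoly (2 * m + 1)).map (Int.castRingHom ℝ) - 2 =
        (X - 2) * ∏ k ∈ Finset.Icc 1 m,
          (X - C (2 * Real.cos (2 * Real.pi * (k : ℝ) / ((2 * m + 1 : ℕ) : ℝ)))) ^ 2) ∧
    (∀ m : ℕ, 1 ≤ m →
      (lucasPoly (2 * m)).map (Int.castRingHom ℝ) - 2 =
        (X - 2) * (X + 2) * ∏ k ∈ Finset.Icc 1 (m - 1),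
          (X - C (2 * Real.cos (2 * Real.pi * (k : ℝ) / ((2 * m : ℕ) : ℝ)))) ^ 2) :=
  ⟨fun m => odd_case m, fun m hm => even_case m hm⟩
end

section
/- For every n ≥ 3 and every nonzero complex number z, the n-th cyclotomic polynomial satisfies C_n(z) = z^{φ(n)/2} · ψ_n(z + 1/z), where ψ_n is regarded as a polynomial with complex coefficients. Consequently ψ_n is a monic polynomial of degree φ(n)/2 with integer coefficients having 2cos(2π/n) as a root, and it is the minimal polynomial of 2cos(2π/n) over ℚ. -/
open Polynomial

/-- `psi n` : for `n > 2`, the polynomial `∏_{0 < j < n/2, gcd(j,n)=1} (X - 2 cos(2πj/n))` in `ℝ[X]`,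
with `psi 1 = X - 2` and `psi 2 = X + 2`. -/
noncomputable def psiPoly : ℕ → Polynomial ℝ
  | 1 => X - 2
  | 2 => X + 2
  | n => ∏ j ∈ Finset.filter (fun j => 0 < j ∧ 2 * j < n ∧ Nat.gcd j n = 1) (Finset.range n),
      (X - C (2 * Real.cos (2 * Real.pi * (j : ℝ) / (n : ℝ))))

namespace CycPsiAux

/-- The index set `{j | 0 < j, 2j < n, gcd(j,n) = 1}`. -/
def sHalf (n : ℕ) : Finset ℕ :=
  Finset.filter (fun j => 0 < j ∧ 2 * j < n ∧ Nat.gcd j n = 1) (Finset.range n)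

/-- The complementary index set `{j | 0 < j, n < 2j, gcd(j,n) = 1}`. -/
def sHalf' (n : ℕ) : Finset ℕ :=
  Finset.filter (fun j => 0 < j ∧ n < 2 * j ∧ Nat.gcd j n = 1) (Finset.range n)

lemma psiPoly_eq {n : ℕ} (hn : 3 ≤ n) :
    psiPoly n = ∏ j ∈ sHalf n, (X - C (2 * Real.cos (2 * Real.pi * (j : ℝ) / (n : ℝ)))) := by
  obtain ⟨m, rfl⟩ : ∃ m, n = m + 3 := ⟨n - 3, by omega⟩
  rfl

lemma two_mul_ne {n j : ℕ} (hn : 3 ≤ n) (hg : Nat.gcd j n = 1) : 2 * j ≠ n := by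
  intro h
  have hdvd : j ∣ n := ⟨2, by omega⟩
  have := Nat.gcd_eq_left hdvd
  omega

lemma gcd_sub {n j : ℕ} (h : j ≤ n) : Nat.gcd (n - j) n = Nat.gcd j n := by
  rw [Nat.gcd_comm]
  have h1 : Nat.gcd (n - (n - j)) (n - j) = Nat.gcd n (n - j) :=
    Nat.gcd_sub_self_left (Nat.sub_le n j)
  rw [Nat.sub_sub_self h] at h1
  rw [← h1]
  exact Nat.gcd_sub_self_right h

lemma map_mem₁ {n : ℕ} (hn : 3 ≤ n) : ∀ j ∈ sHalf n, n - j ∈ sHalf' n := by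
  intro j hj
  simp only [sHalf, sHalf', Finset.mem_filter, Finset.mem_range] at hj ⊢
  obtain ⟨h1, h2, h3, h4⟩ := hj
  refine ⟨by omega, by omega, by omega, ?_⟩
  rw [gcd_sub (by omega)]; exact h4

lemma map_mem₂ {n : ℕ} (hn : 3 ≤ n) : ∀ j ∈ sHalf' n, n - j ∈ sHalf n := by
  intro j hj
  simp only [sHalf, sHalf', Finset.mem_filter, Finset.mem_range] at hj ⊢
  obtain ⟨h1, h2, h3, h4⟩ := hj
  refine ⟨by omega, by omega, by omega, ?_⟩
  rw [gcd_sub (by omega)]; exact h4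

lemma T_eq {n : ℕ} (hn : 3 ≤ n) :
    Finset.filter (fun j => Nat.gcd j n = 1) (Finset.range n) = sHalf n ∪ sHalf' n := by
  ext j
  simp only [sHalf, sHalf', Finset.mem_union, Finset.mem_filter, Finset.mem_range]
  constructor
  · rintro ⟨hj, hg⟩
    have h0 : 0 < j := by
      rcases Nat.eq_zero_or_pos j with rfl | h
      · rw [Nat.gcd_zero_left] at hg; omega
      · exact h
    have hne := two_mul_ne hn hg
    rcases lt_or_gt_of_ne hne with h | h
    · exact Or.inl ⟨hj, h0, h, hg⟩
    · exact Or.inr ⟨hj, h0, h, hg⟩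
  · rintro (⟨hj, _, _, hg⟩ | ⟨hj, _, _, hg⟩) <;> exact ⟨hj, hg⟩

lemma disj {n : ℕ} : Disjoint (sHalf n) (sHalf' n) := by
  rw [Finset.disjoint_left]
  intro j hj hj'
  simp only [sHalf, sHalf', Finset.mem_filter, Finset.mem_range] at hj hj'
  omega

lemma card_sHalf' {n : ℕ} (hn : 3 ≤ n) : (sHalf' n).card = (sHalf n).card := by
  apply Finset.card_nbij' (fun j => n - j) (fun j => n - j) (map_mem₂ hn) (map_mem₁ hn)
  · intro j hj
    simp only [sHalf', Finset.mem_coe, Finset.mem_filter, Finset.mem_range] at hj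
    show n - (n - j) = j
    omega
  · intro j hj
    simp only [sHalf, Finset.mem_coe, Finset.mem_filter, Finset.mem_range] at hj
    show n - (n - j) = j
    omega

lemma totient_eq_two_mul {n : ℕ} (hn : 3 ≤ n) : Nat.totient n = 2 * (sHalf n).card := by
  have h1 : Nat.totient n =
      (Finset.filter (fun j => Nat.gcd j n = 1) (Finset.range n)).card := by
    rw [Nat.totient_eq_card_coprime]
    congr 1
    ext j
    simp only [Finset.mem_filter, Finset.mem_range, Nat.Coprime, Nat.gcd_comm n j]
  rw [h1, T_eq hn, Finset.card_union_of_disjoint disj, card_sHalf' hn]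
  omega

lemma totient_div_two {n : ℕ} (hn : 3 ≤ n) : Nat.totient n / 2 = (sHalf n).card := by
  have := totient_eq_two_mul hn; omega

/-! ### The auxiliary transform `Φ_D p = ∑_j p_j X^(D-j) (X²+1)^j` -/

noncomputable def phiAux {R : Type*} [CommRing R] (D : ℕ) (p : Polynomial R) : Polynomial R :=
  ∑ j ∈ Finset.range (D + 1), C (p.coeff j) * (X ^ (D - j) * (X ^ 2 + 1) ^ j)

variable {R : Type*} [CommRing R]

lemma monic_X2 : ((X : Polynomial R) ^ 2 + 1).Monic := by
  have := monic_X_pow_add_C (R := R) (1 : R) (two_ne_zero)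
  simpa using this

lemma g_monic (D j : ℕ) : ((X : Polynomial R) ^ (D - j) * (X ^ 2 + 1) ^ j).Monic :=
  (monic_X_pow _).mul (monic_X2.pow j)

lemma g_natDegree [Nontrivial R] {D j : ℕ} (h : j ≤ D) :
    ((X : Polynomial R) ^ (D - j) * (X ^ 2 + 1) ^ j).natDegree = D + j := by
  rw [(monic_X_pow _).natDegree_mul (monic_X2.pow j), natDegree_X_pow,
    monic_X2.natDegree_pow]
  have h2 : ((X : Polynomial R) ^ 2 + 1).natDegree = 2 := by
    rw [← C_1, natDegree_X_pow_add_C]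
  rw [h2]
  omega

lemma g_map {S : Type*} [CommRing S] (f : R →+* S) (D j : ℕ) :
    ((X : Polynomial R) ^ (D - j) * (X ^ 2 + 1) ^ j).map f
      = (X : Polynomial S) ^ (D - j) * (X ^ 2 + 1) ^ j := by
  simp [Polynomial.map_mul, Polynomial.map_pow, Polynomial.map_add]

lemma g_coeff_eq_zero [Nontrivial R] {D j j' : ℕ} (hj' : j' ≤ D) (h : j' < j) :
    ((X : Polynomial R) ^ (D - j') * (X ^ 2 + 1) ^ j').coeff (D + j) = 0 :=
  coeff_eq_zero_of_natDegree_lt (by rw [g_natDegree hj']; omega)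

lemma g_coeff_self [Nontrivial R] {D j : ℕ} (hj : j ≤ D) :
    ((X : Polynomial R) ^ (D - j) * (X ^ 2 + 1) ^ j).coeff (D + j) = 1 := by
  have := (g_monic (R := R) D j).coeff_natDegree
  rwa [g_natDegree hj] at this

lemma phi_coeff_formula [Nontrivial R] {p : Polynomial R} {D j : ℕ} (hj : j ≤ D) :
    p.coeff j = (phiAux D p).coeff (D + j)
      - ∑ j' ∈ (Finset.range (D + 1)).erase j,
          p.coeff j' * (((X : Polynomial R) ^ (D - j') * (X ^ 2 + 1) ^ j').coeff (D + j)) := by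
  have hmem : j ∈ Finset.range (D + 1) := Finset.mem_range.mpr (by omega)
  have h1 : (phiAux D p).coeff (D + j)
      = p.coeff j + ∑ j' ∈ (Finset.range (D + 1)).erase j,
          p.coeff j' * (((X : Polynomial R) ^ (D - j') * (X ^ 2 + 1) ^ j').coeff (D + j)) := by
    rw [phiAux, finset_sum_coeff, ← Finset.add_sum_erase _ _ hmem]
    simp only [coeff_C_mul]
    rw [g_coeff_self hj, mul_one]
  rw [h1]; ring

lemma phi_coeff [Nontrivial R] {p : Polynomial R} {D j : ℕ} (hp : p.natDegree ≤ j) (hj : j ≤ D) :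
    (phiAux D p).coeff (D + j) = p.coeff j := by
  have := phi_coeff_formula (p := p) hj
  rw [Finset.sum_eq_zero, sub_zero] at this
  · exact this.symm
  · intro j' hj'
    rw [Finset.mem_erase, Finset.mem_range] at hj'
    rcases lt_or_gt_of_ne hj'.1 with h | h
    · rw [g_coeff_eq_zero (by omega) h, mul_zero]
    · rw [coeff_eq_zero_of_natDegree_lt (by omega), zero_mul]

lemma phi_ne_zero [Nontrivial R] {p : Polynomial R} {D : ℕ} (hp : p ≠ 0)
    (hD : p.natDegree ≤ D) : phiAux D p ≠ 0 := by
  intro h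
  have h1 := phi_coeff (p := p) (le_refl p.natDegree) hD
  rw [h, coeff_zero] at h1
  exact (mt leadingCoeff_eq_zero.mp hp) h1.symm

lemma phi_natDegree_le [Nontrivial R] {p : Polynomial R} {D e : ℕ} (hp : p.natDegree ≤ e)
    (he : e ≤ D) : (phiAux D p).natDegree ≤ D + e := by
  refine (natDegree_sum_le _ _).trans ?_
  rw [Finset.fold_max_le]
  refine ⟨by omega, ?_⟩
  intro j hj
  by_cases h : p.coeff j = 0
  · simp [h]
  · have hje : j ≤ e := le_trans (le_natDegree_of_ne_zero h) hp
    refine (natDegree_mul_le).trans ?_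
    rw [natDegree_C, g_natDegree (by omega)]
    omega

lemma phi_map {S : Type*} [CommRing S] (f : R →+* S) (D : ℕ) (p : Polynomial R) :
    (phiAux D p).map f = phiAux D (p.map f) := by
  rw [phiAux, phiAux, Polynomial.map_sum]
  apply Finset.sum_congr rfl
  intro j _
  rw [Polynomial.map_mul, map_C, g_map, coeff_map]

lemma phi_eval {K : Type*} [Field K] {p : Polynomial K} {D : ℕ} (hp : p.natDegree ≤ D)
    {z : K} (hz : z ≠ 0) : (phiAux D p).eval z = z ^ D * p.eval (z + z⁻¹) := by
  rw [phiAux, eval_finset_sum, eval_eq_sum_range' (Nat.lt_succ_of_le hp), Finset.mul_sum]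
  apply Finset.sum_congr rfl
  intro j hj
  rw [Finset.mem_range, Nat.lt_succ_iff] at hj
  have hz2 : z ^ 2 + 1 = z * (z + z⁻¹) := by field_simp
  have hzD : z ^ (D - j) * z ^ j = z ^ D := by
    rw [← pow_add]; congr 1; omega
  simp only [eval_mul, eval_pow, eval_C, eval_X, eval_add, eval_one]
  rw [hz2, mul_pow]
  calc p.coeff j * (z ^ (D - j) * (z ^ j * (z + z⁻¹) ^ j))
      = (z ^ (D - j) * z ^ j) * (p.coeff j * (z + z⁻¹) ^ j) := by ring
    _ = z ^ D * (p.coeff j * (z + z⁻¹) ^ j) := by rw [hzD]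

/-! ### Complex exponential facts -/

lemma exp_pow (n j : ℕ) (hn : n ≠ 0) :
    Complex.exp (2 * Real.pi * Complex.I / n) ^ j
      = Complex.exp (((2 * Real.pi * j / n : ℝ) : ℂ) * Complex.I) := by
  rw [← Complex.exp_nat_mul]
  congr 1
  have hn' : (n : ℂ) ≠ 0 := Nat.cast_ne_zero.mpr hn
  push_cast
  field_simp

lemma pow_add_inv (n j : ℕ) (hn : n ≠ 0) :
    Complex.exp (2 * Real.pi * Complex.I / n) ^ j
      + (Complex.exp (2 * Real.pi * Complex.I / n) ^ j)⁻¹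
      = ((2 * Real.cos (2 * Real.pi * j / n) : ℝ) : ℂ) := by
  rw [exp_pow n j hn, ← Complex.exp_neg, ← neg_mul, Complex.exp_mul_I, Complex.exp_mul_I,
    Complex.cos_neg, Complex.sin_neg]
  push_cast [Complex.ofReal_cos]
  ring

/-! ### The key complex identity -/

lemma key {n : ℕ} (hn : 3 ≤ n) (z : ℂ) (hz : z ≠ 0) :
    (cyclotomic n ℂ).eval z
      = z ^ (sHalf n).card * ((psiPoly n).map Complex.ofRealHom).eval (z + z⁻¹) := by
  have hn0 : n ≠ 0 := by omega
  have hnpos : 0 < n := by omega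
  haveI : NeZero n := ⟨hn0⟩
  set ζ := Complex.exp (2 * ↑Real.pi * Complex.I / n) with hζdef
  have hζ : IsPrimitiveRoot ζ n := Complex.isPrimitiveRoot_exp n hn0
  have hζ0 : ζ ≠ 0 := Complex.exp_ne_zero _
  have himg : primitiveRoots n ℂ
      = (Finset.filter (fun j => Nat.gcd j n = 1) (Finset.range n)).image (ζ ^ ·) := by
    ext μ
    rw [mem_primitiveRoots hnpos, Finset.mem_image]
    constructor
    · intro hμ
      obtain ⟨i, hi, rfl⟩ := hζ.eq_pow_of_pow_eq_one hμ.pow_eq_one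
      exact ⟨i, Finset.mem_filter.mpr ⟨Finset.mem_range.mpr hi,
        (hζ.pow_iff_coprime hnpos i).mp hμ⟩, rfl⟩
    · rintro ⟨i, hi, rfl⟩
      rw [Finset.mem_filter] at hi
      exact (hζ.pow_iff_coprime hnpos i).mpr hi.2
  have hinj : ∀ x ∈ Finset.filter (fun j => Nat.gcd j n = 1) (Finset.range n),
      ∀ y ∈ Finset.filter (fun j => Nat.gcd j n = 1) (Finset.range n),
      ζ ^ x = ζ ^ y → x = y := by
    intro x hx y hy h
    rw [Finset.mem_filter, Finset.mem_range] at hx hy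
    exact hζ.pow_inj hx.1 hy.1 h
  rw [cyclotomic_eq_prod_X_sub_primitiveRoots hζ, himg, Finset.prod_image hinj, eval_prod]
  simp only [eval_sub, eval_X, eval_C]
  rw [T_eq hn, Finset.prod_union disj]
  have h2 : ∏ j ∈ sHalf' n, (z - ζ ^ j) = ∏ j ∈ sHalf n, (z - ζ ^ (n - j)) := by
    refine Finset.prod_nbij' (fun j => n - j) (fun j => n - j) (map_mem₂ hn) (map_mem₁ hn)
      ?_ ?_ ?_
    · intro j hj
      simp only [sHalf', Finset.mem_filter, Finset.mem_range] at hj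
      show n - (n - j) = j
      omega
    · intro j hj
      simp only [sHalf, Finset.mem_filter, Finset.mem_range] at hj
      show n - (n - j) = j
      omega
    · intro j hj
      simp only [sHalf', Finset.mem_filter, Finset.mem_range] at hj
      show z - ζ ^ j = z - ζ ^ (n - (n - j))
      congr 2
      omega
  rw [h2, ← Finset.prod_mul_distrib]
  have hψ : ((psiPoly n).map Complex.ofRealHom).eval (z + z⁻¹)
      = ∏ j ∈ sHalf n, ((z + z⁻¹) - ((2 * Real.cos (2 * Real.pi * j / n) : ℝ) : ℂ)) := by
    rw [psiPoly_eq hn, Polynomial.map_prod, eval_prod]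
    apply Finset.prod_congr rfl
    intro j _
    simp [Polynomial.map_sub]
  rw [hψ]
  have hcomb : z ^ (sHalf n).card
      * ∏ j ∈ sHalf n, ((z + z⁻¹) - ((2 * Real.cos (2 * Real.pi * j / n) : ℝ) : ℂ))
      = ∏ j ∈ sHalf n, z * ((z + z⁻¹) - ((2 * Real.cos (2 * Real.pi * j / n) : ℝ) : ℂ)) := by
    rw [Finset.prod_mul_distrib, Finset.prod_const]
  rw [hcomb]
  apply Finset.prod_congr rfl
  intro j hj
  simp only [sHalf, Finset.mem_filter, Finset.mem_range] at hj
  have hjlt : j < n := hj.1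
  have hw : ζ ^ j ≠ 0 := pow_ne_zero _ hζ0
  have hinv : ζ ^ (n - j) = (ζ ^ j)⁻¹ := by
    have hmul : ζ ^ (n - j) * ζ ^ j = 1 := by
      rw [← pow_add, Nat.sub_add_cancel (le_of_lt hjlt), hζ.pow_eq_one]
    exact eq_inv_of_mul_eq_one_left hmul
  have hc := pow_add_inv n j hn0
  rw [hinv, ← hc]
  field_simp
  ring

lemma monic_psi {n : ℕ} (hn : 3 ≤ n) : (psiPoly n).Monic := by
  rw [psiPoly_eq hn]
  exact monic_prod_of_monic _ _ fun _ _ => monic_X_sub_C _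

lemma natDegree_psi {n : ℕ} (hn : 3 ≤ n) : (psiPoly n).natDegree = (sHalf n).card := by
  rw [psiPoly_eq hn, natDegree_prod _ _ (fun j _ => X_sub_C_ne_zero _)]
  simp only [natDegree_X_sub_C]
  rw [Finset.sum_const, smul_eq_mul, mul_one]

lemma key_real {n : ℕ} (hn : 3 ≤ n) (x : ℝ) (hx : x ≠ 0) :
    (cyclotomic n ℝ).eval x = x ^ (sHalf n).card * (psiPoly n).eval (x + x⁻¹) := by
  have hxC : (x : ℂ) ≠ 0 := by exact_mod_cast hx
  have h := key hn (x : ℂ) hxC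
  apply Complex.ofReal_injective
  have h1 : (((cyclotomic n ℝ).eval x : ℝ) : ℂ) = (cyclotomic n ℂ).eval (x : ℂ) := by
    rw [← map_cyclotomic n Complex.ofRealHom, eval_map]
    exact (eval₂_at_apply Complex.ofRealHom x).symm
  have h2 : (((psiPoly n).eval (x + x⁻¹) : ℝ) : ℂ)
      = ((psiPoly n).map Complex.ofRealHom).eval ((x : ℂ) + (x : ℂ)⁻¹) := by
    rw [eval_map, ← Complex.ofReal_inv, ← Complex.ofReal_add]
    exact (eval₂_at_apply Complex.ofRealHom (x + x⁻¹)).symm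
  calc (((cyclotomic n ℝ).eval x : ℝ) : ℂ) = (cyclotomic n ℂ).eval (x : ℂ) := h1
    _ = (x : ℂ) ^ (sHalf n).card
        * ((psiPoly n).map Complex.ofRealHom).eval ((x : ℂ) + (x : ℂ)⁻¹) := h
    _ = ((x ^ (sHalf n).card * (psiPoly n).eval (x + x⁻¹) : ℝ) : ℂ) := by
        rw [← h2]; push_cast; ring

lemma phi_psi {n : ℕ} (hn : 3 ≤ n) :
    phiAux ((sHalf n).card) (psiPoly n) = cyclotomic n ℝ := by
  have hdeg : (psiPoly n).natDegree ≤ (sHalf n).card := (natDegree_psi hn).le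
  have hzero : phiAux ((sHalf n).card) (psiPoly n) - cyclotomic n ℝ = 0 := by
    apply eq_zero_of_infinite_isRoot
    apply Set.Infinite.mono (s := Set.Ioi (0 : ℝ)) ?_ (Set.Ioi_infinite 0)
    intro x hx
    have hx0 : x ≠ 0 := ne_of_gt hx
    show IsRoot _ x
    rw [IsRoot, eval_sub, phi_eval hdeg hx0, ← key_real hn x hx0, sub_self]
  exact sub_eq_zero.mp hzero

lemma psi_mem_range_coeff {n : ℕ} (hn : 3 ≤ n) :
    ∃ q : Polynomial ℤ, psiPoly n = q.map (Int.castRingHom ℝ) := by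
  set D := (sHalf n).card with hD
  set p := psiPoly n with hp
  have hdeg : p.natDegree ≤ D := (natDegree_psi hn).le
  have hphi : phiAux D p = (cyclotomic n ℤ).map (Int.castRingHom ℝ) := by
    rw [phi_psi hn, map_cyclotomic]
  have main : ∀ i : ℕ, ∀ j : ℕ, D ≤ j + i →
      p.coeff j ∈ (Int.castRingHom ℝ).range := by
    intro i
    induction i with
    | zero =>
      intro j hj
      rcases Nat.lt_or_ge D j with h | h
      · have hz : p.coeff j = 0 := coeff_eq_zero_of_natDegree_lt (by omega)
        exact RingHom.mem_range.mpr ⟨0, by simp [hz]⟩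
      · have hjD : j ≤ D := h
        rw [phi_coeff_formula hjD, Finset.sum_eq_zero, sub_zero, hphi, coeff_map]
        · exact RingHom.mem_range.mpr ⟨_, rfl⟩
        · intro j' hj'
          rw [Finset.mem_erase, Finset.mem_range] at hj'
          rw [g_coeff_eq_zero (by omega) (by omega), mul_zero]
    | succ i ih =>
      intro j hj
      rcases Nat.lt_or_ge (j + i) D with h | h
      swap
      · exact ih j h
      have hjD : j ≤ D := by omega
      rw [phi_coeff_formula hjD]
      apply sub_mem
      · rw [hphi, coeff_map]; exact RingHom.mem_range.mpr ⟨_, rfl⟩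
      · apply sum_mem
        intro j' hj'
        rw [Finset.mem_erase, Finset.mem_range] at hj'
        rcases lt_or_gt_of_ne hj'.1 with hlt | hgt
        · rw [g_coeff_eq_zero (by omega) hlt, mul_zero]
          exact zero_mem _
        · apply mul_mem
          · exact ih j' (by omega)
          · rw [← g_map (Int.castRingHom ℝ) D j', coeff_map]
            exact RingHom.mem_range.mpr ⟨_, rfl⟩
  have hlift : p ∈ Polynomial.lifts (Int.castRingHom ℝ) := by
    rw [lifts_iff_coeff_lifts]
    intro k
    have := main D k (by omega)
    rwa [RingHom.mem_range] at this
  obtain ⟨q, hq⟩ := (mem_lifts _).mp hlift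
  exact ⟨q, hq.symm⟩

lemma one_mem_sHalf {n : ℕ} (hn : 3 ≤ n) : 1 ∈ sHalf n := by
  simp only [sHalf, Finset.mem_filter, Finset.mem_range]
  exact ⟨by omega, by omega, by omega, Nat.gcd_one_left n⟩

lemma psi_root {n : ℕ} (hn : 3 ≤ n) :
    (psiPoly n).eval (2 * Real.cos (2 * Real.pi / (n : ℝ))) = 0 := by
  rw [psiPoly_eq hn, eval_prod]
  apply Finset.prod_eq_zero (one_mem_sHalf hn)
  simp

end CycPsiAux

open CycPsiAux

/-- For `n ≥ 3`: `C_n(z) = z^{φ(n)/2} · ψ_n(z + 1/z)` for all nonzero `z : ℂ`; consequently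
`ψ_n` is monic of degree `φ(n)/2` with integer coefficients, has `2cos(2π/n)` as a root,
and is the minimal polynomial of `2cos(2π/n)` over `ℚ`. -/
theorem cyclotomic_eq_psi (n : ℕ) (hn : 3 ≤ n) :
    (∀ z : ℂ, z ≠ 0 →
      (Polynomial.cyclotomic n ℂ).eval z =
        z ^ (Nat.totient n / 2) * ((psiPoly n).map Complex.ofRealHom).eval (z + z⁻¹)) ∧
    (psiPoly n).Monic ∧
    (psiPoly n).natDegree = Nat.totient n / 2 ∧
    (∃ q : Polynomial ℤ, psiPoly n = q.map (Int.castRingHom ℝ)) ∧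
    (psiPoly n).eval (2 * Real.cos (2 * Real.pi / (n : ℝ))) = 0 ∧
    (minpoly ℚ (2 * Real.cos (2 * Real.pi / (n : ℝ)))).map (algebraMap ℚ ℝ) = psiPoly n := by
  have hD2 : Nat.totient n / 2 = (sHalf n).card := totient_div_two hn
  have hnpos : 0 < n := by omega
  have hn0 : n ≠ 0 := by omega
  obtain ⟨q, hq⟩ := psi_mem_range_coeff hn
  have hmonic := monic_psi hn
  have hndeg : (psiPoly n).natDegree = Nat.totient n / 2 := by
    rw [natDegree_psi hn, hD2]
  have hroot := psi_root hn
  set α : ℝ := 2 * Real.cos (2 * Real.pi / (n : ℝ)) with hα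
  have hqmonic : q.Monic := by
    apply monic_of_injective (f := Int.castRingHom ℝ) (fun a b hab => by simpa using hab)
    rw [← hq]; exact hmonic
  have hcast : (algebraMap ℚ ℝ).comp (Int.castRingHom ℚ) = Int.castRingHom ℝ :=
    RingHom.ext_int _ _
  have haev : (Polynomial.aeval α) (q.map (Int.castRingHom ℚ)) = 0 := by
    rw [aeval_def, ← eval_map, Polynomial.map_map, hcast, ← hq]
    exact hroot
  have hαint : IsIntegral ℚ α := ⟨q.map (Int.castRingHom ℚ), hqmonic.map _, haev⟩
  set m := minpoly ℚ α with hm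
  have hmdvd : m ∣ q.map (Int.castRingHom ℚ) := minpoly.dvd ℚ α haev
  haveI : NeZero n := ⟨hn0⟩
  set ζ := Complex.exp (2 * ↑Real.pi * Complex.I / n) with hζdef
  have hζ : IsPrimitiveRoot ζ n := Complex.isPrimitiveRoot_exp n hn0
  have hζ0 : ζ ≠ 0 := Complex.exp_ne_zero _
  have hζα : ζ + ζ⁻¹ = (α : ℂ) := by
    have h1 := pow_add_inv n 1 hn0
    rw [pow_one] at h1
    rw [h1, hα]
    norm_num
  have hcast2 : (algebraMap ℚ ℂ) = Complex.ofRealHom.comp (algebraMap ℚ ℝ) :=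
    Subsingleton.elim _ _
  have hmmonic : m.Monic := minpoly.monic hαint
  have hΦeval : (Polynomial.aeval ζ) (phiAux m.natDegree m) = 0 := by
    rw [aeval_def, ← eval_map, phi_map]
    have hdegm : (m.map (algebraMap ℚ ℂ)).natDegree ≤ m.natDegree := natDegree_map_le
    rw [phi_eval hdegm hζ0, hζα]
    have h5 : (m.map (algebraMap ℚ ℝ)).eval α = 0 := by
      rw [eval_map, ← aeval_def]; exact minpoly.aeval ℚ α
    have h6 : (m.map (algebraMap ℚ ℂ)).eval ((α : ℝ) : ℂ) = 0 := by
      rw [hcast2, ← Polynomial.map_map, eval_map]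
      calc eval₂ Complex.ofRealHom (↑α) (m.map (algebraMap ℚ ℝ))
          = Complex.ofRealHom ((m.map (algebraMap ℚ ℝ)).eval α) := eval₂_at_apply _ α
        _ = 0 := by rw [h5]; simp
    rw [h6, mul_zero]
  have hΦne : phiAux m.natDegree m ≠ 0 := phi_ne_zero (minpoly.ne_zero hαint) le_rfl
  have hlow : Nat.totient n ≤ m.natDegree + m.natDegree := by
    have h6 : cyclotomic n ℚ ∣ phiAux m.natDegree m := by
      rw [cyclotomic_eq_minpoly_rat hζ hnpos]
      exact minpoly.dvd ℚ ζ hΦeval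
    have h7 := natDegree_le_of_dvd h6 hΦne
    rw [natDegree_cyclotomic] at h7
    exact h7.trans (phi_natDegree_le le_rfl le_rfl)
  have hqQmonic : (q.map (Int.castRingHom ℚ)).Monic := hqmonic.map _
  have hqQdeg : (q.map (Int.castRingHom ℚ)).natDegree = Nat.totient n / 2 := by
    rw [hqmonic.natDegree_map, ← hqmonic.natDegree_map (Int.castRingHom ℝ), ← hq, hndeg]
  have hup : m.natDegree ≤ Nat.totient n / 2 := by
    have h8 := natDegree_le_of_dvd hmdvd hqQmonic.ne_zero
    rw [hqQdeg] at h8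
    exact h8
  have heven : Even (Nat.totient n) := Nat.totient_even (by omega)
  have hdeq : m.natDegree = Nat.totient n / 2 := by
    obtain ⟨t, ht⟩ := heven
    omega
  obtain ⟨c, hc⟩ := hmdvd
  have hcmonic : c.Monic := hmmonic.of_mul_monic_left (hc ▸ hqQmonic)
  have hcdeg : c.natDegree = 0 := by
    have h9 : (q.map (Int.castRingHom ℚ)).natDegree = m.natDegree + c.natDegree := by
      rw [hc, natDegree_mul hmmonic.ne_zero hcmonic.ne_zero]
    rw [hqQdeg] at h9
    omega
  have hc1 : c = 1 := eq_one_of_monic_natDegree_zero hcmonic hcdeg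
  have hmq : m = q.map (Int.castRingHom ℚ) := by rw [hc, hc1, mul_one]
  refine ⟨?_, hmonic, hndeg, ⟨q, hq⟩, hroot, ?_⟩
  · intro z hz
    rw [hD2]
    exact key hn z hz
  · rw [hmq, Polynomial.map_map, hcast, ← hq]
end

section
/- For every n ≥ 1 the factorization L_n(x) − 2 = ψ_1(x) · ψ_2(x)^{e_n} · ∏_{k ∣ n, k ≠ 1, k ≠ 2} ψ_k(x)² holds in ℝ[x], where e_n = (1 + (−1)^n)/2 (i.e. e_n = 1 if n is even and e_n = 0 if n is odd). -/
open Polynomial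

namespace LucasPsiAux

open Complex Finset

lemma psiPoly_of_three_le (k : ℕ) (hk : 3 ≤ k) :
    psiPoly k = ∏ j ∈ Finset.filter (fun j => 0 < j ∧ 2 * j < k ∧ Nat.gcd j k = 1) (Finset.range k),
      (X - C (2 * Real.cos (2 * Real.pi * (j : ℝ) / (k : ℝ)))) := by
  match k, hk with
  | (m+3), _ => rfl

lemma two_cos_complex (x : ℝ) :
    ((2 * Real.cos x : ℝ) : ℂ) = Complex.exp (x * I) + (Complex.exp (x * I))⁻¹ := by
  rw [← Complex.exp_neg, Complex.exp_mul_I, ← neg_mul, Complex.exp_mul_I]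
  push_cast [Complex.sin_neg, Complex.cos_neg, Complex.ofReal_cos]
  ring

lemma zeta_pow (k j : ℕ) (hk : 0 < k) :
    Complex.exp (2 * Real.pi * I / k) ^ j = Complex.exp ((2 * Real.pi * j / k : ℝ) * I) := by
  have hk' : (k:ℂ) ≠ 0 := by exact_mod_cast hk.ne'
  rw [← Complex.exp_nat_mul]
  congr 1
  push_cast
  field_simp

lemma zeta_pow_k (k : ℕ) (hk : 0 < k) :
    Complex.exp (2 * Real.pi * I / k) ^ k = 1 := by
  have hk' : (k:ℂ) ≠ 0 := by exact_mod_cast hk.ne'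
  rw [← Complex.exp_nat_mul]
  rw [show (k:ℂ) * (2 * Real.pi * I / k) = 2 * Real.pi * I by field_simp]
  exact Complex.exp_two_pi_mul_I

lemma factor_eq (z w : ℂ) (hz : z ≠ 0) (hw : w ≠ 0) :
    z + z⁻¹ - (w + w⁻¹) = (z - w) * (z - w⁻¹) * z⁻¹ := by
  field_simp
  ring

lemma lucas_eval (n : ℕ) (z : ℂ) (hz : z ≠ 0) :
    Polynomial.eval (z + z⁻¹) ((lucasPoly n).map (Int.castRingHom ℂ)) = z ^ n + z⁻¹ ^ n := by
  induction n using Nat.twoStepInduction with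
  | zero => simp [lucasPoly]; norm_num
  | one => simp [lucasPoly]
  | more n ih1 ih0 =>
    show Polynomial.eval _ ((lucasPoly (n+2)).map _) = _
    rw [show lucasPoly (n+2) = X * lucasPoly (n+1) - lucasPoly n from rfl]
    simp only [Polynomial.map_sub, Polynomial.map_mul, Polynomial.map_X, eval_sub, eval_mul,
      eval_X, ih1, ih0]
    linear_combination (z ^ n + z⁻¹ ^ n) * mul_inv_cancel₀ hz

lemma cyclotomic_complex (k : ℕ) (hk : 0 < k) :
    cyclotomic k ℂ = ∏ j ∈ (Finset.range k).filter (fun j => Nat.gcd j k = 1),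
      (X - C (Complex.exp (2 * Real.pi * I / k) ^ j)) := by
  have : NeZero k := ⟨hk.ne'⟩
  have hζ := Complex.isPrimitiveRoot_exp k hk.ne'
  set ζ := Complex.exp (2 * Real.pi * I / k) with hζdef
  have himg : primitiveRoots k ℂ =
      Finset.image (fun j => ζ ^ j) ((Finset.range k).filter (fun j => Nat.gcd j k = 1)) := by
    ext μ
    simp only [mem_primitiveRoots hk, Finset.mem_image, Finset.mem_filter, Finset.mem_range]
    constructor
    · intro hμ
      obtain ⟨i, hik, rfl⟩ := hζ.eq_pow_of_pow_eq_one hμ.pow_eq_one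
      exact ⟨i, ⟨hik, (hζ.pow_iff_coprime hk i).mp hμ⟩, rfl⟩
    · rintro ⟨j, ⟨hjk, hcop⟩, rfl⟩
      exact (hζ.pow_iff_coprime hk j).mpr hcop
  rw [cyclotomic_eq_prod_X_sub_primitiveRoots hζ, himg, Finset.prod_image]
  intro i hi j hj h
  exact hζ.pow_inj (Finset.mem_range.mp (Finset.mem_filter.mp hi).1)
    (Finset.mem_range.mp (Finset.mem_filter.mp hj).1) h

lemma U_split (k : ℕ) (hk : 3 ≤ k) :
    (range k).filter (fun j => Nat.gcd j k = 1) =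
      ((range k).filter (fun j => 0 < j ∧ 2*j < k ∧ Nat.gcd j k = 1)) ∪
      ((range k).filter (fun j => 0 < j ∧ k < 2*j ∧ Nat.gcd j k = 1)) := by
  ext j
  simp only [mem_filter, mem_range, mem_union]
  constructor
  · rintro ⟨hjk, hg⟩
    have hj0 : j ≠ 0 := by rintro rfl; rw [Nat.gcd_zero_left] at hg; omega
    have h2 : 2 * j ≠ k := by
      intro h
      have hdvd : j ∣ k := ⟨2, by omega⟩
      rw [Nat.gcd_eq_left hdvd] at hg
      omega
    rcases lt_or_gt_of_ne h2 with h | h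
    · exact Or.inl ⟨hjk, by omega, h, hg⟩
    · exact Or.inr ⟨hjk, by omega, h, hg⟩
  · rintro (⟨h1, _, _, h3⟩ | ⟨h1, _, _, h3⟩) <;> exact ⟨h1, h3⟩

lemma U_disj (k : ℕ) :
    Disjoint ((range k).filter (fun j => 0 < j ∧ 2*j < k ∧ Nat.gcd j k = 1))
      ((range k).filter (fun j => 0 < j ∧ k < 2*j ∧ Nat.gcd j k = 1)) := by
  rw [Finset.disjoint_left]
  simp only [mem_filter, mem_range]
  rintro j ⟨_, _, h, _⟩ ⟨_, _, h', _⟩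
  omega

lemma sub_mem_S {k a : ℕ} (h : a < k ∧ 0 < a ∧ k < 2*a ∧ Nat.gcd a k = 1) :
    k - a < k ∧ 0 < k - a ∧ 2*(k-a) < k ∧ Nat.gcd (k-a) k = 1 := by
  obtain ⟨h1, h2, h3, h4⟩ := h
  exact ⟨by omega, by omega, by omega,
    (Nat.coprime_self_sub_left (m := a) (n := k) (by omega)).mpr h4⟩

lemma sub_mem_S' {k a : ℕ} (h : a < k ∧ 0 < a ∧ 2*a < k ∧ Nat.gcd a k = 1) :
    k - a < k ∧ 0 < k - a ∧ k < 2*(k-a) ∧ Nat.gcd (k-a) k = 1 := by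
  obtain ⟨h1, h2, h3, h4⟩ := h
  exact ⟨by omega, by omega, by omega,
    (Nat.coprime_self_sub_left (m := a) (n := k) (by omega)).mpr h4⟩

lemma S'_prod {M : Type*} [CommMonoid M] (k : ℕ) (f : ℕ → M) :
    ∏ j ∈ (range k).filter (fun j => 0 < j ∧ k < 2*j ∧ Nat.gcd j k = 1), f j =
    ∏ j ∈ (range k).filter (fun j => 0 < j ∧ 2*j < k ∧ Nat.gcd j k = 1), f (k - j) := by
  apply Finset.prod_nbij' (fun j => k - j) (fun j => k - j)
  · intro a ha
    simp only [mem_filter, mem_range] at ha ⊢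
    exact sub_mem_S (by tauto)
  · intro a ha
    simp only [mem_filter, mem_range] at ha ⊢
    exact sub_mem_S' (by tauto)
  · intro a ha
    simp only [mem_filter, mem_range] at ha
    omega
  · intro a ha
    simp only [mem_filter, mem_range] at ha
    omega
  · intro a ha
    simp only [mem_filter, mem_range] at ha
    congr 1
    omega

lemma S_card (k : ℕ) (hk : 3 ≤ k) :
    2 * ((range k).filter (fun j => 0 < j ∧ 2*j < k ∧ Nat.gcd j k = 1)).card = k.totient := by
  have hU : ((range k).filter (fun j => Nat.gcd j k = 1)).card = k.totient := by
    rw [Nat.totient]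
    congr 1
    apply Finset.filter_congr
    intro a _
    simp [Nat.Coprime, Nat.gcd_comm]
  rw [← hU, U_split k hk, Finset.card_union_of_disjoint (U_disj k)]
  have : ((range k).filter (fun j => 0 < j ∧ k < 2*j ∧ Nat.gcd j k = 1)).card =
      ((range k).filter (fun j => 0 < j ∧ 2*j < k ∧ Nat.gcd j k = 1)).card := by
    apply Finset.card_nbij' (fun j => k - j) (fun j => k - j)
    · intro a ha
      simp only [mem_coe, mem_filter, mem_range] at ha ⊢
      exact sub_mem_S (by tauto)
    · intro a ha
      simp only [mem_coe, mem_filter, mem_range] at ha ⊢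
      exact sub_mem_S' (by tauto)
    · intro a ha
      simp only [mem_coe, mem_filter, mem_range] at ha ⊢
      omega
    · intro a ha
      simp only [mem_coe, mem_filter, mem_range] at ha ⊢
      omega
  omega

lemma psi_eval_ge3 (k : ℕ) (hk : 3 ≤ k) (θ : ℝ) :
    (Polynomial.eval (Complex.exp (θ * I) + (Complex.exp (θ * I))⁻¹)
        ((psiPoly k).map (algebraMap ℝ ℂ))) ^ 2 =
      (Polynomial.eval (Complex.exp (θ * I)) (cyclotomic k ℂ)) ^ 2
        / (Complex.exp (θ * I)) ^ k.totient := by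
  have hk0 : 0 < k := by omega
  set z := Complex.exp (θ * I) with hzdef
  have hz : z ≠ 0 := Complex.exp_ne_zero _
  set ζ := Complex.exp (2 * Real.pi * I / k) with hζdef
  have hζ0 : ζ ≠ 0 := Complex.exp_ne_zero _
  set S := (range k).filter (fun j => 0 < j ∧ 2*j < k ∧ Nat.gcd j k = 1) with hSdef
  have heval : Polynomial.eval (z + z⁻¹) ((psiPoly k).map (algebraMap ℝ ℂ)) =
      ∏ j ∈ S, ((z - ζ ^ j) * (z - ζ ^ (k - j)) * z⁻¹) := by
    rw [psiPoly_of_three_le k hk, Polynomial.map_prod, eval_prod]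
    apply Finset.prod_congr rfl
    intro j hj
    simp only [hSdef, mem_filter, mem_range] at hj
    obtain ⟨hjk, hj0, hj2, hjg⟩ := hj
    rw [Polynomial.map_sub, Polynomial.map_X, Polynomial.map_C, eval_sub, eval_X, eval_C]
    have hc : (algebraMap ℝ ℂ) (2 * Real.cos (2 * Real.pi * j / k)) = ζ ^ j + (ζ ^ j)⁻¹ := by
      have := two_cos_complex (2 * Real.pi * j / k)
      rw [zeta_pow k j hk0]
      exact this
    rw [hc]
    have hwinv : (ζ ^ j)⁻¹ = ζ ^ (k - j) := by
      have h1 : ζ ^ (k - j) * ζ ^ j = 1 := by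
        rw [← pow_add, show k - j + j = k by omega]
        exact zeta_pow_k k hk0
      exact (eq_inv_of_mul_eq_one_left h1).symm
    rw [← hwinv]
    exact factor_eq z (ζ^j) hz (pow_ne_zero _ hζ0)
  rw [heval]
  rw [Finset.prod_mul_distrib, Finset.prod_mul_distrib, Finset.prod_const]
  have hS' : ∏ j ∈ S, (z - ζ ^ (k - j)) =
      ∏ j ∈ (range k).filter (fun j => 0 < j ∧ k < 2*j ∧ Nat.gcd j k = 1), (z - ζ ^ j) :=
    (S'_prod k (fun j => z - ζ ^ j)).symm
  rw [hS']
  have hcyc : Polynomial.eval z (cyclotomic k ℂ) =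
      (∏ j ∈ S, (z - ζ ^ j)) *
      ∏ j ∈ (range k).filter (fun j => 0 < j ∧ k < 2*j ∧ Nat.gcd j k = 1), (z - ζ ^ j) := by
    rw [cyclotomic_complex k hk0, eval_prod]
    simp only [eval_sub, eval_X, eval_C]
    rw [U_split k hk, Finset.prod_union (U_disj k)]
  rw [hcyc]
  have hcard := S_card k hk
  rw [eq_div_iff (pow_ne_zero _ hz)]
  rw [← hcard]
  have hzz : z⁻¹ ^ #S * z ^ #S = 1 := by
    rw [inv_pow, inv_mul_cancel₀ (pow_ne_zero _ hz)]
  calc ((∏ j ∈ S, (z - ζ ^ j)) *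
          (∏ j ∈ (range k).filter (fun j => 0 < j ∧ k < 2*j ∧ Nat.gcd j k = 1), (z - ζ ^ j)) *
          z⁻¹ ^ #S) ^ 2 * z ^ (2 * #S)
      = ((∏ j ∈ S, (z - ζ ^ j)) *
          (∏ j ∈ (range k).filter (fun j => 0 < j ∧ k < 2*j ∧ Nat.gcd j k = 1), (z - ζ ^ j))) ^ 2 *
          (z⁻¹ ^ #S * z ^ #S) ^ 2 := by ring
    _ = _ := by rw [hzz, one_pow, mul_one]

lemma psi_eval_one (θ : ℝ) :
    Polynomial.eval (Complex.exp (θ * I) + (Complex.exp (θ * I))⁻¹)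
        ((psiPoly 1).map (algebraMap ℝ ℂ)) =
      (Polynomial.eval (Complex.exp (θ * I)) (cyclotomic 1 ℂ)) ^ 2
        / (Complex.exp (θ * I)) ^ Nat.totient 1 := by
  have hz : Complex.exp (θ * I) ≠ 0 := Complex.exp_ne_zero _
  have h1 : psiPoly 1 = X - 2 := rfl
  rw [h1, cyclotomic_one, Nat.totient_one]
  simp only [Polynomial.map_sub, Polynomial.map_X, Polynomial.map_ofNat, eval_sub, eval_X,
    eval_one, eval_ofNat, pow_one]
  field_simp
  ring

lemma psi_eval_two (θ : ℝ) :
    Polynomial.eval (Complex.exp (θ * I) + (Complex.exp (θ * I))⁻¹)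
        ((psiPoly 2).map (algebraMap ℝ ℂ)) =
      (Polynomial.eval (Complex.exp (θ * I)) (cyclotomic 2 ℂ)) ^ 2
        / (Complex.exp (θ * I)) ^ Nat.totient 2 := by
  have hz : Complex.exp (θ * I) ≠ 0 := Complex.exp_ne_zero _
  have h1 : psiPoly 2 = X + 2 := rfl
  rw [h1, cyclotomic_two, Nat.totient_two]
  simp only [Polynomial.map_add, Polynomial.map_X, Polynomial.map_ofNat, eval_add, eval_X,
    eval_one, eval_ofNat, pow_one]
  field_simp
  ring

lemma divisors_filter_not (n : ℕ) (hn : 1 ≤ n) :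
    (Nat.divisors n).filter (fun k => ¬(k ≠ 1 ∧ k ≠ 2)) =
      if Even n then ({1, 2} : Finset ℕ) else {1} := by
  have heven : Even n ↔ 2 ∣ n := ⟨fun ⟨r, h⟩ => ⟨r, by omega⟩, fun ⟨r, h⟩ => ⟨r, by omega⟩⟩
  ext k
  simp only [Finset.mem_filter, Nat.mem_divisors, not_and_or, not_ne_iff]
  split_ifs with h
  · simp only [Finset.mem_insert, Finset.mem_singleton]
    constructor
    · rintro ⟨_, (rfl | rfl)⟩
      · exact Or.inl rfl
      · exact Or.inr rfl
    · rintro (rfl | rfl)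
      · exact ⟨⟨one_dvd n, by omega⟩, Or.inl rfl⟩
      · exact ⟨⟨heven.mp h, by omega⟩, Or.inr rfl⟩
  · simp only [Finset.mem_singleton]
    constructor
    · rintro ⟨⟨hdvd, _⟩, (rfl | rfl)⟩
      · rfl
      · exact absurd (heven.mpr hdvd) h
    · rintro rfl
      exact ⟨⟨one_dvd n, by omega⟩, Or.inl rfl⟩

lemma cast_eval (p : Polynomial ℝ) (x : ℝ) :
    ((p.eval x : ℝ) : ℂ) = (p.map (algebraMap ℝ ℂ)).eval (x : ℂ) := by
  rw [Polynomial.eval_map, ← Complex.coe_algebraMap]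
  exact (Polynomial.eval₂_at_apply (algebraMap ℝ ℂ) x).symm

end LucasPsiAux

open LucasPsiAux Complex Finset in
/-- For `n ≥ 1`: `L n - 2 = ψ₁ · ψ₂^{e_n} · ∏_{k ∣ n, k ≠ 1, 2} ψ_k²` in `ℝ[X]`,
where `e_n = 1` if `n` is even and `e_n = 0` if `n` is odd. -/
theorem lucas_sub_two_psi_factorization (n : ℕ) (hn : 1 ≤ n) :
    (lucasPoly n).map (Int.castRingHom ℝ) - 2 =
      psiPoly 1 * psiPoly 2 ^ (if Even n then 1 else 0) *
        ∏ k ∈ Finset.filter (fun k => k ≠ 1 ∧ k ≠ 2) (Nat.divisors n), (psiPoly k) ^ 2 := by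
  apply Polynomial.eq_of_infinite_eval_eq
  have hinj : Set.InjOn (fun θ : ℝ => 2 * Real.cos θ) (Set.Ioo 0 Real.pi) := by
    intro a ha b hb hab
    exact Real.injOn_cos ⟨le_of_lt ha.1, le_of_lt ha.2⟩ ⟨le_of_lt hb.1, le_of_lt hb.2⟩
      (by dsimp at hab; linarith)
  have hIoo : (Set.Ioo (0:ℝ) Real.pi).Infinite := Set.Ioo_infinite Real.pi_pos
  apply Set.Infinite.mono (s := (fun θ : ℝ => 2 * Real.cos θ) '' Set.Ioo 0 Real.pi) _
    (hIoo.image hinj)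
  rintro x ⟨θ, hθ, rfl⟩
  simp only [Set.mem_setOf_eq]
  apply Complex.ofReal_injective
  set z := Complex.exp (θ * I) with hzdef
  have hz : z ≠ 0 := Complex.exp_ne_zero _
  have hx : ((2 * Real.cos θ : ℝ) : ℂ) = z + z⁻¹ := two_cos_complex θ
  rw [cast_eval, cast_eval, hx]
  -- LHS
  have hL : Polynomial.eval (z + z⁻¹)
      (((lucasPoly n).map (Int.castRingHom ℝ) - 2).map (algebraMap ℝ ℂ)) =
      (z ^ n - 1) ^ 2 / z ^ n := by
    rw [Polynomial.map_sub, Polynomial.map_map]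
    rw [show (algebraMap ℝ ℂ).comp (Int.castRingHom ℝ) = Int.castRingHom ℂ from
      Subsingleton.elim _ _]
    rw [eval_sub, lucas_eval n z hz]
    simp only [Polynomial.map_ofNat, eval_ofNat]
    field_simp
    linear_combination (by rw [← mul_pow, mul_inv_cancel₀ hz, one_pow] : z ^ n * z⁻¹ ^ n = 1)
  rw [hL]
  -- RHS
  rw [Polynomial.map_mul, Polynomial.map_mul, Polynomial.map_pow, Polynomial.map_prod]
  rw [eval_mul, eval_mul, eval_pow, eval_prod]
  simp only [Polynomial.map_pow, eval_pow]
  set g : ℕ → ℂ := fun k => (Polynomial.eval z (cyclotomic k ℂ)) ^ 2 / z ^ k.totient with hgdef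
  have h1 : Polynomial.eval (z + z⁻¹) ((psiPoly 1).map (algebraMap ℝ ℂ)) = g 1 :=
    psi_eval_one θ
  have h2 : (Polynomial.eval (z + z⁻¹) ((psiPoly 2).map (algebraMap ℝ ℂ)))
      ^ (if Even n then 1 else 0) = if Even n then g 2 else 1 := by
    split_ifs with h
    · rw [pow_one]; exact psi_eval_two θ
    · rw [pow_zero]
  have h3 : ∀ k ∈ (Nat.divisors n).filter (fun k => k ≠ 1 ∧ k ≠ 2),
      (Polynomial.eval (z + z⁻¹) ((psiPoly k).map (algebraMap ℝ ℂ))) ^ 2 = g k := by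
    intro k hk
    simp only [Finset.mem_filter, Nat.mem_divisors] at hk
    have hk0 : k ≠ 0 := by
      rintro rfl
      exact absurd hk.1.1 (by simp; omega)
    exact psi_eval_ge3 k (by omega) θ
  rw [h1, h2, Finset.prod_congr rfl h3]
  -- regroup
  have hsplit : g 1 * (if Even n then g 2 else 1) *
      ∏ k ∈ (Nat.divisors n).filter (fun k => k ≠ 1 ∧ k ≠ 2), g k =
      ∏ k ∈ Nat.divisors n, g k := by
    rw [← Finset.prod_filter_mul_prod_filter_not (Nat.divisors n) (fun k => k ≠ 1 ∧ k ≠ 2) g]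
    rw [divisors_filter_not n hn]
    split_ifs with h
    · rw [Finset.prod_insert (by simp), Finset.prod_singleton]
      ring
    · rw [Finset.prod_singleton]
      ring
  rw [hsplit, hgdef]
  simp only
  rw [Finset.prod_div_distrib, Finset.prod_pow, Finset.prod_pow_eq_pow_sum]
  rw [← eval_prod, prod_cyclotomic_eq_X_pow_sub_one (by omega) ℂ, Nat.sum_totient]
  simp only [eval_sub, eval_pow, eval_X, eval_one]
end

section
/- For every n ≥ 1, the zpread polynomial has the explicit expansion Z_n(x) = ∑_{k=1}^{n} (−1)^{k−1} · (n/k) · C(n+k−1, n−k) · x^k, i.e. for 1 ≤ k ≤ n the coefficient of x^k in Z_n(x), viewed as a rational number, equals (−1)^{k−1} · (n/k) · C(n+k−1, n−k), and the coefficient of x^0 is 0. -/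
open Polynomial

def bb (n k : ℕ) : ℤ :=
  match k with
  | 0 => 0
  | j + 1 => (-1) ^ j * ((n + j + 1).choose (2 * j + 2) + (n + j).choose (2 * j + 2))

lemma zpread_zero : zpread 0 = 0 := by
  simp [zpread, lucasPoly]

lemma zpread_one : zpread 1 = X := by
  simp [zpread, lucasPoly]

lemma pasc (a b : ℕ) :
    (a+3).choose (b+2) + (a+2).choose (b+2) + (a+1).choose (b+2) + a.choose (b+2)
      = 2*((a+2).choose (b+2)) + 2*((a+1).choose (b+2)) + (a+1).choose b + a.choose b := by
  rw [show (a+3).choose (b+2) = (a+2).choose (b+1) + (a+2).choose (b+2) from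
      Nat.choose_succ_succ _ _,
    show (a+2).choose (b+1) = (a+1).choose b + (a+1).choose (b+1) from Nat.choose_succ_succ _ _,
    show (a+1).choose (b+1) = a.choose b + a.choose (b+1) from Nat.choose_succ_succ _ _,
    show (a+1).choose (b+2) = a.choose (b+1) + a.choose (b+2) from Nat.choose_succ_succ _ _]
  ring

lemma zpread_rec (n : ℕ) :
    zpread (n+2) = C 2 * zpread (n+1) - X * zpread (n+1) - zpread n + C 2 * X := by
  have h : lucasPoly (n+2) = X * lucasPoly (n+1) - lucasPoly n := rfl
  simp only [zpread, h, sub_comp, mul_comp, X_comp]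
  rw [show (C 2 : Polynomial ℤ) = 2 by norm_num]
  ring

lemma coeff_eq : ∀ n k, (zpread n).coeff k = bb n k
  | 0, 0 => by simp [zpread_zero, bb]
  | 0, j+1 => by
      simp [zpread_zero, bb, Nat.choose_eq_zero_of_lt (show j+1 < 2*j+2 by omega),
        Nat.choose_eq_zero_of_lt (show j < 2*j+2 by omega)]
  | 1, 0 => by simp [zpread_one, bb]
  | 1, 1 => by simp [zpread_one, bb]
  | 1, j+2 => by
      simp [zpread_one, bb, coeff_X, Nat.choose_eq_zero_of_lt (show 1+(j+1)+1 < 2*(j+1)+2 by omega),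
        Nat.choose_eq_zero_of_lt (show 1+(j+1) < 2*(j+1)+2 by omega)]
  | n+2, 0 => by
      rw [zpread_rec]
      rw [coeff_add, coeff_sub, coeff_sub, coeff_C_mul, coeff_C_mul]
      simp [coeff_eq (n+1) 0, coeff_eq n 0, bb, mul_coeff_zero]
  | n+2, k+1 => by
      rw [zpread_rec]
      rw [coeff_add, coeff_sub, coeff_sub, coeff_C_mul, coeff_X_mul, coeff_C_mul, coeff_X]
      rw [coeff_eq (n+1) (k+1), coeff_eq (n+1) k, coeff_eq n (k+1)]
      cases k with
      | zero =>
        have hp := pasc n 0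
        simp only [bb]
        have e1 : n+2+0+1 = n+3 := by omega
        have e2 : n+1+0+1 = n+2 := by omega
        have e3 : n+0+1 = n+1 := by omega
        have e4 : n+2+0 = n+2 := by omega
        have e5 : n+1+0 = n+1 := by omega
        have e6 : n+0 = n := by omega
        have e7 : 2*0+2 = 2 := by omega
        simp only [Nat.zero_add, Nat.choose_zero_right, e1, e2, e3, e4, e5, e6, e7,
          pow_zero, one_mul, if_pos rfl] at hp ⊢
        push_cast
        omega
      | succ j =>
        simp only [bb, if_neg (show ¬ (1 = j+1+1) by omega)]
        have e2 : 2*(j+1)+2 = 2*j+2+2 := by omega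
        have e3 : n+1+(j+1) = n+j+1+1 := by omega
        have e5 : n+1+j = n+j+1 := by omega
        have e7 : n+(j+1) = n+j+1 := by omega
        have e9 : n+2+(j+1) = n+j+1+2 := by omega
        have f1 : n+j+1+2+1 = n+j+1+3 := by omega
        have f2 : n+j+1+1+1 = n+j+1+2 := by omega
        simp only [e2, e3, e5, e7, e9, f1, f2]
        have hp := pasc (n+j+1) (2*j+2)
        have hp' := congrArg (Nat.cast : ℕ → ℤ) hp
        push_cast at hp'
        linear_combination ((-1:ℤ)^j) * hp'

lemma nkey (n j : ℕ) (h : j + 1 ≤ n) :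
    (j+1) * ((n+j+1).choose (2*j+2) + (n+j).choose (2*j+2)) = n * (n+j).choose (2*j+1) := by
  obtain ⟨d, rfl⟩ : ∃ d, n = j + 1 + d := ⟨n - (j+1), by omega⟩
  have hB : (j+1+d+j+1).choose (2*j+1+1) =
      (j+1+d+j).choose (2*j+1) + (j+1+d+j).choose (2*j+1+1) := Nat.choose_succ_succ _ _
  have hA := Nat.choose_succ_right_eq (j+1+d+j) (2*j+1)
  rw [show j+1+d+j - (2*j+1) = d by omega] at hA
  rw [show 2*j+1+1 = 2*j+2 by omega] at hA hB
  zify at hA hB ⊢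
  linear_combination ((j:ℤ)+1) * hB + hA


/-- For `n ≥ 1`: `Z n = ∑_{k=1}^{n} (-1)^{k-1} (n/k) C(n+k-1, n-k) x^k`, i.e. the coefficient
of `x^k` (as a rational number) is `(-1)^{k-1} (n/k) C(n+k-1, n-k)` for `1 ≤ k ≤ n`, and the
constant coefficient is `0`. -/
theorem zpread_coeff (n : ℕ) (hn : 1 ≤ n) :
    (∀ k : ℕ, 1 ≤ k → k ≤ n →
      ((zpread n).coeff k : ℚ) =
        (-1) ^ (k - 1) * ((n : ℚ) / (k : ℚ)) * (Nat.choose (n + k - 1) (n - k) : ℚ)) ∧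
    (zpread n).coeff 0 = 0 := by
  constructor
  · intro k hk1 hkn
    obtain ⟨j, rfl⟩ : ∃ j, k = j + 1 := ⟨k - 1, by omega⟩
    rw [coeff_eq n (j+1)]
    simp only [bb]
    rw [show n + (j+1) - 1 = n + j by omega, show j + 1 - 1 = j by omega,
      show n - (j+1) = n + j - (2*j+1) by omega,
      Nat.choose_symm (by omega : 2*j+1 ≤ n+j)]
    have h := nkey n j (by omega)
    have h' := congrArg (Nat.cast : ℕ → ℚ) h
    push_cast at h' ⊢
    have hj : ((j:ℚ) + 1) ≠ 0 := by positivity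
    field_simp
    linear_combination h'
  · rw [coeff_eq n 0]; rfl
end

section
/- For every n ≥ 1 and every nonzero complex number u, the zpread polynomial satisfies Z_n(−(u − 1/u)²) = −(u^n − 1/u^n)². -/
open Polynomial

lemma lucas_aeval (t : ℂ) (ht : t ≠ 0) :
    ∀ n : ℕ, Polynomial.aeval (t + t⁻¹) (lucasPoly n) = t ^ n + (t ^ n)⁻¹ := by
  intro n
  induction n using Nat.strong_induction_on with
  | _ n ih =>
    match n with
    | 0 => simp [lucasPoly, map_ofNat]; norm_num
    | 1 => simp [lucasPoly]
    | k + 2 =>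
      rw [lucasPoly]
      have h1 := ih (k + 1) (by omega)
      have h2 := ih k (by omega)
      simp only [map_sub, map_mul, aeval_X, h1, h2]
      field_simp
      ring

/-- For `n ≥ 1` and nonzero `u : ℂ`, `Z n (-(u - 1/u)²) = -(uⁿ - 1/uⁿ)²`. -/
theorem zpread_eval_sub_inv (n : ℕ) (hn : 1 ≤ n) (u : ℂ) (hu : u ≠ 0) :
    Polynomial.aeval (-(u - u⁻¹) ^ 2) (zpread n) = -(u ^ n - (u ^ n)⁻¹) ^ 2 := by
  have hu2 : (u ^ 2 : ℂ) ≠ 0 := pow_ne_zero _ hu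
  have key := lucas_aeval (u ^ 2) hu2 n
  have harg : (2 : ℂ) - (-(u - u⁻¹) ^ 2) = u ^ 2 + (u ^ 2)⁻¹ := by
    field_simp
    ring
  rw [zpread, map_sub, aeval_comp, map_sub, aeval_X]
  simp only [map_ofNat]
  rw [harg, key]
  have : ((u ^ 2) ^ n : ℂ) = (u ^ n) ^ 2 := by ring
  rw [this]
  field_simp
  ring
end
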